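/- arXiv:1906.02477 — 9 statements merged into one kernel-verified Lean document; each statement's English description precedes it below -/
import Mathlib

section
/- Let X ⊆ ℝⁿ and let f : X → ℝᵐ be bi-Lipschitz with distortion at most D. Then there exists f' : ℝⁿ → ℝ^{m+n} with distortion at most 3D such that f'(x) = (f(x), 0) for every x ∈ X. -/
open Metric Set Finset Filter
open scoped RealInnerProductSpace Topology NNReal

lemma sum_sq_identity {F : Type*} [NormedAddCommGroup F] [InnerProductSpace ℝ F]
    {ι : Type*} (t : Finset ι) (c : ι → ℝ) (a : ι → F) (hc : ∑ i ∈ t, c i = 1) :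
    ∑ i ∈ t, ∑ j ∈ t, c i * c j * ‖a i - a j‖^2
      = 2 * (∑ i ∈ t, c i * ‖a i‖^2) - 2 * ‖∑ i ∈ t, c i • a i‖^2 := by
  have h2 : ‖∑ i ∈ t, c i • a i‖^2 = ∑ i ∈ t, ∑ j ∈ t, c i * c j * ⟪a i, a j⟫ := by
    rw [← real_inner_self_eq_norm_sq, sum_inner]
    refine Finset.sum_congr rfl fun i _ => ?_
    rw [real_inner_smul_left, inner_sum, Finset.mul_sum]
    refine Finset.sum_congr rfl fun j _ => ?_
    rw [real_inner_smul_right]; ring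
  calc ∑ i ∈ t, ∑ j ∈ t, c i * c j * ‖a i - a j‖^2
      = ∑ i ∈ t, ∑ j ∈ t, (c i * ‖a i‖^2 * c j + c i * (c j * ‖a j‖^2)
          - 2 * (c i * c j * ⟪a i, a j⟫)) := by
        refine Finset.sum_congr rfl fun i _ => Finset.sum_congr rfl fun j _ => ?_
        rw [norm_sub_sq_real]; ring
    _ = 2 * (∑ i ∈ t, c i * ‖a i‖^2) - 2 * ‖∑ i ∈ t, c i • a i‖^2 := by
        rw [h2]
        simp only [Finset.sum_sub_distrib, Finset.sum_add_distrib, ← Finset.sum_mul,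
          ← Finset.mul_sum, hc]
        ring

lemma kirszbraun_finite {E F : Type*} [NormedAddCommGroup E] [InnerProductSpace ℝ E]
    [NormedAddCommGroup F] [InnerProductSpace ℝ F] [FiniteDimensional ℝ F]
    (K : ℝ) (hK : 0 ≤ K) (s : Finset E) (φ : E → F) (z : E)
    (h : ∀ x ∈ s, ∀ y ∈ s, dist (φ x) (φ y) ≤ K * dist x y) :
    ∃ w : F, ∀ x ∈ s, dist w (φ x) ≤ K * dist z x := by
  haveI : CompleteSpace F := FiniteDimensional.complete ℝ F
  rcases s.eq_empty_or_nonempty with rfl | hs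
  · exact ⟨0, fun x hx => absurd hx (by simp)⟩
  classical
  set r : E → ℝ := fun x => K * dist z x with hr
  set g : F → ℝ := fun w => s.sup' hs fun x => ‖w - φ x‖^2 - r x^2 with hg
  have hgc : Continuous g := by
    rw [continuous_iff_continuousAt]
    intro w
    exact ContinuousAt.finset_sup'_apply hs fun i _ => by fun_prop
  obtain ⟨x₀, hx₀⟩ := id hs
  -- coercivity
  have hco : Tendsto g (cocompact F) atTop := by
    have hq : Tendsto (fun t : ℝ => (t - ‖φ x₀‖)^2 - r x₀^2) atTop atTop := by
      apply tendsto_atTop_add_const_right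
      exact (tendsto_pow_atTop two_ne_zero).comp (tendsto_atTop_add_const_right _ _ tendsto_id)
    refine tendsto_atTop_mono' _ ?_ (hq.comp tendsto_norm_cocompact_atTop)
    filter_upwards [tendsto_norm_cocompact_atTop.eventually_ge_atTop (‖φ x₀‖)] with w hw
    have h1 : ‖w‖ - ‖φ x₀‖ ≤ ‖w - φ x₀‖ := norm_sub_norm_le _ _
    have h2 : (‖w‖ - ‖φ x₀‖)^2 ≤ ‖w - φ x₀‖^2 := by
      apply pow_le_pow_left₀ (by linarith) h1
    have h3 : ‖w - φ x₀‖^2 - r x₀^2 ≤ g w := Finset.le_sup' (fun x => ‖w - φ x‖^2 - r x^2) hx₀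
    simp only [Function.comp_apply]
    linarith
  obtain ⟨w₀, hw₀⟩ := hgc.exists_forall_le hco
  set M := g w₀ with hM
  set A : Finset E := s.filter (fun x => ‖w₀ - φ x‖^2 - r x^2 = M) with hA
  have hmemA : ∀ x ∈ A, ‖w₀ - φ x‖^2 - r x^2 = M := fun x hx => (Finset.mem_filter.1 hx).2
  have hAs : ∀ x ∈ A, x ∈ s := fun x hx => (Finset.mem_filter.1 hx).1
  have hAne : A.Nonempty := by
    obtain ⟨x₁, hx₁, hx₁e⟩ := s.exists_mem_eq_sup' hs fun x => ‖w₀ - φ x‖^2 - r x^2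
    exact ⟨x₁, Finset.mem_filter.2 ⟨hx₁, hx₁e.symm⟩⟩
  have hle : ∀ x ∈ s, ‖w₀ - φ x‖^2 - r x^2 ≤ M :=
    fun x hx => Finset.le_sup' (fun x => ‖w₀ - φ x‖^2 - r x^2) hx
  -- 0 is in the convex hull of the "gradients"
  have h0 : (0:F) ∈ convexHull ℝ ((fun x => w₀ - φ x) '' (A : Set E)) := by
    by_contra h0
    have hfin : ((fun x => w₀ - φ x) '' (A : Set E)).Finite := A.finite_toSet.image _
    obtain ⟨L, u, hLs, hu0⟩ := geometric_hahn_banach_closed_point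
      (convex_convexHull ℝ _) (hfin.isClosed_convexHull ℝ) h0
    have hu : u < 0 := by simpa using hu0
    set v : F := (InnerProductSpace.toDual ℝ F).symm L with hv
    have hvL : ∀ y : F, ⟪v, y⟫ = L y := fun y => InnerProductSpace.toDual_symm_apply
    have hexp : ∀ (t : ℝ) (x : E), ‖w₀ + t • v - φ x‖^2
        = ‖w₀ - φ x‖^2 + 2*t*(L (w₀ - φ x)) + t^2*‖v‖^2 := by
      intro t x
      have e1 : w₀ + t • v - φ x = (w₀ - φ x) + t • v := by abel
      rw [e1, norm_add_sq_real, real_inner_smul_right, norm_smul, Real.norm_eq_abs,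
        mul_pow, sq_abs, real_inner_comm, hvL]
      ring
    have key : ∀ x ∈ s, ∀ᶠ t in 𝓝[>] (0:ℝ), ‖w₀ + t • v - φ x‖^2 - r x^2 < M := by
      intro x hx
      by_cases hxA : x ∈ A
      · have hL : L (w₀ - φ x) < u :=
          hLs _ (subset_convexHull ℝ _ (Set.mem_image_of_mem _ hxA))
        have hεpos : 0 < (-2*u)/(‖v‖^2+1) := div_pos (by linarith) (by positivity)
        filter_upwards [Ioo_mem_nhdsGT hεpos] with t ht
        have h1 : t * (‖v‖^2+1) < -2*u := (lt_div_iff₀ (by positivity)).1 ht.2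
        have h2 : ‖w₀ - φ x‖^2 - r x^2 = M := hmemA x hxA
        rw [hexp]
        nlinarith [ht.1, sq_nonneg t, mul_pos ht.1 ht.1]
      · have hlt : ‖w₀ - φ x‖^2 - r x^2 < M := by
          refine lt_of_le_of_ne (hle x hx) ?_
          intro hcon
          exact hxA (Finset.mem_filter.2 ⟨hx, hcon⟩)
        have hcont : Tendsto (fun t : ℝ => ‖w₀ - φ x‖^2 + 2*t*(L (w₀ - φ x)) + t^2*‖v‖^2 - r x^2)
            (𝓝 0) (𝓝 (‖w₀ - φ x‖^2 - r x^2)) := by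
          have : Continuous (fun t : ℝ => ‖w₀ - φ x‖^2 + 2*t*(L (w₀ - φ x)) + t^2*‖v‖^2 - r x^2) := by
            fun_prop
          have h0' := this.tendsto 0
          simpa using h0'
        have hev : ∀ᶠ t in 𝓝[>] (0:ℝ),
            ‖w₀ - φ x‖^2 + 2*t*(L (w₀ - φ x)) + t^2*‖v‖^2 - r x^2 < M :=
          Eventually.filter_mono (nhdsWithin_le_nhds) (hcont.eventually_lt_const hlt)
        filter_upwards [hev] with t ht
        rw [hexp]; exact ht
      -- end per x
    have hall := (eventually_all_finset s).2 key
    obtain ⟨t, ht⟩ := hall.exists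
    have : g (w₀ + t • v) < M := (Finset.sup'_lt_iff hs).2 fun x hx => ht x hx
    exact absurd (hw₀ (w₀ + t • v)) (by linarith)
  -- extract convex combination
  rw [mem_convexHull_iff_exists_fintype] at h0
  obtain ⟨ι, hι, c, p, hc0, hc1, hpmem, hpsum⟩ := h0
  have hξ : ∀ i, ∃ x, x ∈ A ∧ w₀ - φ x = p i := by
    intro i
    rcases hpmem i with ⟨x, hxA, hxe⟩
    exact ⟨x, hxA, hxe⟩
  choose ξ hξA hξe using hξ
  -- algebra
  have Hy := sum_sq_identity Finset.univ c (fun i => w₀ - φ (ξ i)) hc1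
  have Hx := sum_sq_identity Finset.univ c (fun i => ξ i - z) hc1
  have hzero : ∑ i : ι, c i • (w₀ - φ (ξ i)) = 0 := by
    rw [← hpsum]
    exact Finset.sum_congr rfl fun i _ => by rw [hξe]
  have hcomp : ∑ i : ι, ∑ j : ι, c i * c j * ‖(w₀ - φ (ξ i)) - (w₀ - φ (ξ j))‖^2
      ≤ ∑ i : ι, ∑ j : ι, c i * c j * ‖(ξ i - z) - (ξ j - z)‖^2 * K^2 := by
    refine Finset.sum_le_sum fun i _ => Finset.sum_le_sum fun j _ => ?_
    have e1 : (w₀ - φ (ξ i)) - (w₀ - φ (ξ j)) = φ (ξ j) - φ (ξ i) := by abel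
    have e2 : (ξ i - z) - (ξ j - z) = ξ i - ξ j := by abel
    rw [e1, e2]
    have hd : dist (φ (ξ j)) (φ (ξ i)) ≤ K * dist (ξ j) (ξ i) :=
      h _ (hAs _ (hξA j)) _ (hAs _ (hξA i))
    have hd2 : ‖φ (ξ j) - φ (ξ i)‖^2 ≤ (K * ‖ξ j - ξ i‖)^2 := by
      rw [← dist_eq_norm, ← dist_eq_norm]
      exact pow_le_pow_left₀ dist_nonneg hd 2
    have hcc : 0 ≤ c i * c j := mul_nonneg (hc0 i) (hc0 j)
    rw [norm_sub_rev (ξ i) (ξ j)]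
    have h5 := mul_le_mul_of_nonneg_left hd2 hcc
    nlinarith [h5]
  have hMy : ∀ i : ι, ‖w₀ - φ (ξ i)‖^2 = M + r (ξ i)^2 := by
    intro i
    have := hmemA _ (hξA i)
    linarith
  have hsum_y : ∑ i : ι, c i * ‖w₀ - φ (ξ i)‖^2 = M + ∑ i : ι, c i * r (ξ i)^2 := by
    calc ∑ i : ι, c i * ‖w₀ - φ (ξ i)‖^2 = ∑ i : ι, (c i * M + c i * r (ξ i)^2) :=
          Finset.sum_congr rfl fun i _ => by rw [hMy]; ring
      _ = M + ∑ i : ι, c i * r (ξ i)^2 := by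
          rw [Finset.sum_add_distrib, ← Finset.sum_mul, hc1]; ring
  have hrx : ∀ i : ι, K^2 * ‖ξ i - z‖^2 = r (ξ i)^2 := by
    intro i
    have : ‖ξ i - z‖ = dist z (ξ i) := by rw [← dist_eq_norm, dist_comm]
    rw [this, hr]; ring
  have hxle : ∑ i : ι, ∑ j : ι, c i * c j * ‖(ξ i - z) - (ξ j - z)‖^2 * K^2
      ≤ 2 * ∑ i : ι, c i * r (ξ i)^2 := by
    have h1 : (∑ i : ι, ∑ j : ι, c i * c j * ‖(ξ i - z) - (ξ j - z)‖^2) * K^2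
        = (2 * (∑ i : ι, c i * ‖ξ i - z‖^2) - 2*‖∑ i : ι, c i • (ξ i - z)‖^2) * K^2 := by
      rw [Hx]
    have h2 : ∑ i : ι, ∑ j : ι, c i * c j * ‖(ξ i - z) - (ξ j - z)‖^2 * K^2
        = (∑ i : ι, ∑ j : ι, c i * c j * ‖(ξ i - z) - (ξ j - z)‖^2) * K^2 := by
      rw [Finset.sum_mul]
      exact Finset.sum_congr rfl fun i _ => by rw [Finset.sum_mul]
    have h3 : (∑ i : ι, c i * ‖ξ i - z‖^2) * K^2 = ∑ i : ι, c i * r (ξ i)^2 := by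
      rw [Finset.sum_mul]
      exact Finset.sum_congr rfl fun i _ => by rw [← hrx]; ring
    have h4 : 0 ≤ ‖∑ i : ι, c i • (ξ i - z)‖^2 * K^2 := by positivity
    nlinarith
  have hyeq : ∑ i : ι, ∑ j : ι, c i * c j * ‖(w₀ - φ (ξ i)) - (w₀ - φ (ξ j))‖^2
      = 2 * M + 2 * ∑ i : ι, c i * r (ξ i)^2 := by
    rw [Hy, hzero, hsum_y, norm_zero]
    ring
  have hM0 : M ≤ 0 := by
    rw [hyeq] at hcomp
    linarith [hcomp, hxle]
  refine ⟨w₀, fun x hx => ?_⟩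
  have h1 : ‖w₀ - φ x‖^2 - r x^2 ≤ 0 := le_trans (hle x hx) hM0
  have h2 : 0 ≤ r x := mul_nonneg hK dist_nonneg
  have h3 : dist w₀ (φ x) = ‖w₀ - φ x‖ := dist_eq_norm _ _
  have hrr : r x = K * dist z x := rfl
  rw [hrr] at h1 h2
  have h4 : 0 ≤ dist w₀ (φ x) + K * dist z x := by positivity
  nlinarith [h1, h3, h4, dist_nonneg (x := w₀) (y := φ x)]

lemma kirszbraun_onePoint {E F : Type*} [NormedAddCommGroup E] [InnerProductSpace ℝ E]
    [NormedAddCommGroup F] [InnerProductSpace ℝ F] [FiniteDimensional ℝ F]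
    (K : ℝ) (hK : 0 ≤ K) (X : Set E) (φ : E → F) (z : E)
    (h : ∀ x ∈ X, ∀ y ∈ X, dist (φ x) (φ y) ≤ K * dist x y) :
    ∃ w : F, ∀ x ∈ X, dist w (φ x) ≤ K * dist z x := by
  haveI : CompleteSpace F := FiniteDimensional.complete ℝ F
  haveI : ProperSpace F := FiniteDimensional.proper ℝ F
  rcases X.eq_empty_or_nonempty with rfl | ⟨x₀, hx₀⟩
  · exact ⟨0, by simp⟩
  classical
  have hfip : (closedBall (φ x₀) (K * dist z x₀) ∩
      ⋂ i : X, closedBall (φ (i : E)) (K * dist z (i : E))).Nonempty := by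
    apply (isCompact_closedBall _ _).inter_iInter_nonempty
    · exact fun i => isClosed_closedBall
    · intro u
      set S : Finset E := insert x₀ (u.image Subtype.val) with hS
      have hSX : ∀ x ∈ S, x ∈ X := by
        intro x hx
        rcases Finset.mem_insert.1 hx with rfl | hx
        · exact hx₀
        · rcases Finset.mem_image.1 hx with ⟨i, _, rfl⟩
          exact i.2
      obtain ⟨w, hw⟩ := kirszbraun_finite K hK S φ z
        (fun x hx y hy => h x (hSX x hx) y (hSX y hy))
      refine ⟨w, ?_, ?_⟩
      · exact mem_closedBall.2 (hw x₀ (Finset.mem_insert_self _ _))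
      · refine Set.mem_iInter₂.2 fun i hi => mem_closedBall.2 ?_
        exact hw (i : E) (Finset.mem_insert_of_mem (Finset.mem_image_of_mem Subtype.val hi))
  obtain ⟨w, -, hw⟩ := hfip
  refine ⟨w, fun x hx => ?_⟩
  exact mem_closedBall.1 (Set.mem_iInter.1 hw ⟨x, hx⟩)

theorem kirszbraun {E F : Type*} [NormedAddCommGroup E] [InnerProductSpace ℝ E]
    [NormedAddCommGroup F] [InnerProductSpace ℝ F] [FiniteDimensional ℝ F]
    (K : ℝ≥0) (X : Set E) (f : E → F) (hf : LipschitzOnWith K f X) :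
    ∃ g : E → F, LipschitzWith K g ∧ Set.EqOn f g X := by
  classical
  set 𝒮 : Set (Set (E × F)) :=
    {G | (fun x => (x, f x)) '' X ⊆ G ∧
      ∀ p ∈ G, ∀ q ∈ G, dist p.2 q.2 ≤ (K : ℝ) * dist p.1 q.1} with h𝒮
  have hG₀ : (fun x => (x, f x)) '' X ∈ 𝒮 := by
    constructor
    · exact subset_rfl
    · rintro p ⟨a, ha, rfl⟩ q ⟨b, hb, rfl⟩
      exact hf.dist_le_mul a ha b hb
  obtain ⟨Mx, -, hMmax⟩ := zorn_subset_nonempty 𝒮 (fun c hc hchain hcne => by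
    refine ⟨⋃₀ c, ⟨?_, ?_⟩, fun s hs => Set.subset_sUnion_of_mem hs⟩
    · obtain ⟨G, hG⟩ := hcne
      exact (hc hG).1.trans (Set.subset_sUnion_of_mem hG)
    · rintro p hp q hq
      obtain ⟨G₁, hG₁, hpG₁⟩ := hp
      obtain ⟨G₂, hG₂, hqG₂⟩ := hq
      rcases hchain.total hG₁ hG₂ with hsub | hsub
      · exact (hc hG₂).2 p (hsub hpG₁) q hqG₂
      · exact (hc hG₁).2 p hpG₁ q (hsub hqG₂)) _ hG₀
  have hM𝒮 : Mx ∈ 𝒮 := hMmax.prop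
  -- totality of the maximal element
  have htot : ∀ z : E, ∃ y : F, (z, y) ∈ Mx := by
    intro z
    by_contra hz
    push_neg at hz
    set ψ : E → F := fun x => if h : ∃ y, (x, y) ∈ Mx then h.choose else 0 with hψ
    have hψ' : ∀ x ∈ Prod.fst '' Mx, (x, ψ x) ∈ Mx := by
      rintro x ⟨p, hp, rfl⟩
      have hex : ∃ y, (p.1, y) ∈ Mx := ⟨p.2, hp⟩
      simpa [hψ, dif_pos hex] using hex.choose_spec
    obtain ⟨w, hw⟩ := kirszbraun_onePoint (K : ℝ) K.2 (Prod.fst '' Mx) ψ z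
      (fun x hx y hy => (hM𝒮.2 _ (hψ' x hx) _ (hψ' y hy)))
    have hmem : insert (z, w) Mx ∈ 𝒮 := by
      constructor
      · exact hM𝒮.1.trans (Set.subset_insert _ _)
      · intro p hp q hq
        have key : ∀ q ∈ Mx, dist w q.2 ≤ (K : ℝ) * dist z q.1 := by
          intro q hq
          have hq1 : q.1 ∈ Prod.fst '' Mx := ⟨q, hq, rfl⟩
          have h1 : dist q.2 (ψ q.1) ≤ (K : ℝ) * dist q.1 q.1 :=
            hM𝒮.2 q hq _ (hψ' _ hq1)
          have h2 : q.2 = ψ q.1 := by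
            have := h1
            simp only [dist_self, mul_zero] at this
            exact dist_le_zero.1 this
          rw [h2]
          exact hw q.1 hq1
        rcases Set.mem_insert_iff.1 hp with rfl | hp <;>
          rcases Set.mem_insert_iff.1 hq with rfl | hq
        · simp
        · exact key q hq
        · rw [dist_comm, dist_comm (p.1) z]
          exact key p hp
        · exact hM𝒮.2 p hp q hq
    have : insert (z, w) Mx ⊆ Mx := hMmax.2 hmem (Set.subset_insert _ _)
    exact hz w (this (Set.mem_insert _ _))
  choose g hg using htot
  refine ⟨g, ?_, ?_⟩
  · apply LipschitzWith.of_dist_le_mul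
    intro x y
    exact hM𝒮.2 (x, g x) (hg x) (y, g y) (hg y)
  · intro x hx
    have h1 : (x, f x) ∈ Mx := hM𝒮.1 ⟨x, hx, rfl⟩
    have h2 := hM𝒮.2 (x, f x) h1 (x, g x) (hg x)
    simp only [dist_self, mul_zero] at h2
    exact (dist_le_zero.1 h2)


lemma lower_num (s d A B r2 r3 : ℝ) (hs : 0 < s) (hd : 0 ≤ d) (hA : 0 ≤ A) (hB : 0 ≤ B)
    (h2 : r2^2 = 2) (h3 : r3^2 = 3) (h2p : 0 < r2) (h3p : 0 < r3)
    (hlow : s * d - A ≤ r2 * B) : s / r3 * d ≤ Real.sqrt (A^2 + B^2) := by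
  have key : (s / r3 * d)^2 ≤ A^2 + B^2 := by
    have hgoal : (s / r3 * d)^2 = s^2 * d^2 / 3 := by
      rw [div_mul_eq_mul_div, div_pow, h3]; ring
    rw [hgoal, div_le_iff₀ (by norm_num : (0:ℝ) < 3)]
    have hsum : s * d ≤ A + r2 * B := by linarith
    have hsd : 0 ≤ s * d := mul_nonneg hs.le hd
    have hAB : 0 ≤ A + r2 * B := add_nonneg hA (mul_nonneg h2p.le hB)
    have hsq := mul_le_mul hsum hsum hsd hAB
    nlinarith [hsq, sq_nonneg (r2 * A - B), h2]
  calc s / r3 * d = Real.sqrt ((s / r3 * d)^2) :=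
        (Real.sqrt_sq (mul_nonneg (div_nonneg hs.le h3p.le) hd)).symm
    _ ≤ Real.sqrt (A^2 + B^2) := Real.sqrt_le_sqrt key

lemma upper_num (D s d A B r2 r3 : ℝ) (hs : 0 < s) (hD : 1 ≤ D) (hd : 0 ≤ d) (hA : 0 ≤ A)
    (hB : 0 ≤ B) (h2 : r2^2 = 2) (h3 : r3^2 = 3) (h2p : 0 < r2) (h3p : 0 < r3)
    (hAup : A ≤ D * s * d) (hup : r2 * B ≤ s * d + D * s * d) :
    Real.sqrt (A^2 + B^2) ≤ 3 * D * (s / r3) * d := by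
  have hrhs : 0 ≤ 3 * D * (s / r3) * d := by
    apply mul_nonneg _ hd
    apply mul_nonneg _ (div_nonneg hs.le h3p.le)
    linarith
  have key2 : A^2 + B^2 ≤ (3 * D * (s / r3) * d)^2 := by
    have hrw : (3 * D * (s / r3) * d)^2 = 3 * (D*s*d)^2 := by
      rw [mul_pow, mul_pow, mul_pow, div_pow, h3]; ring
    rw [hrw]
    have hA2 : A^2 ≤ (D*s*d)^2 := by nlinarith [hAup, hA]
    have hB2 : 2 * B^2 ≤ (s*d + D*s*d)^2 := by
      have h1 : 0 ≤ r2 * B := mul_nonneg h2p.le hB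
      nlinarith [mul_le_mul hup hup h1 (le_trans h1 hup), h2]
    nlinarith [hA2, hB2, mul_nonneg (mul_nonneg (sub_nonneg.2 hD)
      (by linarith : (0:ℝ) ≤ 3*D+1)) (sq_nonneg (s*d))]
  calc Real.sqrt (A^2 + B^2) ≤ Real.sqrt ((3 * D * (s / r3) * d)^2) := Real.sqrt_le_sqrt key2
    _ = 3 * D * (s / r3) * d := Real.sqrt_sq hrhs

theorem stmt_3 (n m : ℕ) (X : Set (EuclideanSpace ℝ (Fin n)))
    (f : X → EuclideanSpace ℝ (Fin m)) (D s : ℝ) (hs : 0 < s) (hD : 1 ≤ D)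
    (hbi : ∀ a b : X, s * dist (a : EuclideanSpace ℝ (Fin n)) (b : EuclideanSpace ℝ (Fin n)) ≤
        dist (f a) (f b) ∧
      dist (f a) (f b) ≤ D * s * dist (a : EuclideanSpace ℝ (Fin n)) (b : EuclideanSpace ℝ (Fin n))) :
    ∃ f' : EuclideanSpace ℝ (Fin n) →
        WithLp 2 (EuclideanSpace ℝ (Fin m) × EuclideanSpace ℝ (Fin n)),
      (∃ s' > (0 : ℝ), ∀ a b : EuclideanSpace ℝ (Fin n),
        s' * dist a b ≤ dist (f' a) (f' b) ∧ dist (f' a) (f' b) ≤ 3 * D * s' * dist a b) ∧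
      ∀ (x : EuclideanSpace ℝ (Fin n)) (hx : x ∈ X),
        f' x = (WithLp.equiv 2 (EuclideanSpace ℝ (Fin m) × EuclideanSpace ℝ (Fin n))).symm
          (f ⟨x, hx⟩, 0) := by
  classical
  have hD0 : (0:ℝ) < D := lt_of_lt_of_le one_pos hD
  rcases X.eq_empty_or_nonempty with rfl | hXne
  · -- trivial case : X is empty
    refine ⟨fun x => (WithLp.equiv 2 ((EuclideanSpace ℝ (Fin m)) × (EuclideanSpace ℝ (Fin n)))).symm (0, x), ⟨1, one_pos, fun a b => ?_⟩,
      fun x hx => absurd hx (by simp)⟩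
    have hdist : dist ((WithLp.equiv 2 ((EuclideanSpace ℝ (Fin m)) × (EuclideanSpace ℝ (Fin n)))).symm ((0:(EuclideanSpace ℝ (Fin m))), a))
        ((WithLp.equiv 2 ((EuclideanSpace ℝ (Fin m)) × (EuclideanSpace ℝ (Fin n)))).symm ((0:(EuclideanSpace ℝ (Fin m))), b)) = dist a b := by
      rw [WithLp.prod_dist_eq_of_L2]
      simp [WithLp.equiv_symm_apply, WithLp.toLp_fst, WithLp.toLp_snd, Real.sqrt_sq dist_nonneg]
    rw [hdist]
    constructor
    · nlinarith [dist_nonneg (x := a) (y := b)]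
    · nlinarith [dist_nonneg (x := a) (y := b)]
  -- main case
  set Kup : ℝ≥0 := ⟨D*s, by positivity⟩ with hKup
  set Kinv : ℝ≥0 := ⟨s⁻¹, by positivity⟩ with hKinv
  set f₀ : (EuclideanSpace ℝ (Fin n)) → (EuclideanSpace ℝ (Fin m)) := fun x => if h : x ∈ X then f ⟨x, h⟩ else 0 with hf₀
  have hf0X : ∀ (y : (EuclideanSpace ℝ (Fin n))) (hy : y ∈ X), f₀ y = f ⟨y, hy⟩ := fun y hy => dif_pos hy
  have hf₀lip : LipschitzOnWith Kup f₀ X := by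
    apply LipschitzOnWith.of_dist_le_mul
    intro x hx y hy
    rw [hf0X x hx, hf0X y hy]
    exact (hbi ⟨x, hx⟩ ⟨y, hy⟩).2
  obtain ⟨F₁, hF₁lip, hF₁eq⟩ := kirszbraun Kup X f₀ hf₀lip
  set φ : (EuclideanSpace ℝ (Fin m)) → (EuclideanSpace ℝ (Fin n)) := fun u => if h : ∃ x, x ∈ X ∧ f₀ x = u then h.choose else 0 with hφdef
  have hφ : ∀ u ∈ f₀ '' X, φ u ∈ X ∧ f₀ (φ u) = u := by
    rintro u ⟨x, hx, rfl⟩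
    have hex : ∃ y, y ∈ X ∧ f₀ y = f₀ x := ⟨x, hx, rfl⟩
    simpa [hφdef, dif_pos hex] using hex.choose_spec
  have hφlip : LipschitzOnWith Kinv φ (f₀ '' X) := by
    apply LipschitzOnWith.of_dist_le_mul
    intro u hu v hv
    obtain ⟨hu1, hu2⟩ := hφ u hu
    obtain ⟨hv1, hv2⟩ := hφ v hv
    have h1 := (hbi ⟨φ u, hu1⟩ ⟨φ v, hv1⟩).1
    rw [← hf0X _ hu1, ← hf0X _ hv1, hu2, hv2] at h1
    have h1' : s * dist (φ u) (φ v) ≤ dist u v := h1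
    show dist (φ u) (φ v) ≤ (s⁻¹ : ℝ) * dist u v
    rw [inv_mul_eq_div, le_div_iff₀ hs]
    linarith
  obtain ⟨K₁, hK₁lip, hK₁eq⟩ := kirszbraun Kinv (f₀ '' X) φ hφlip
  have hinv : ∀ x ∈ X, K₁ (F₁ x) = x := by
    intro x hx
    have h1 : F₁ x = f₀ x := (hF₁eq hx).symm
    have h2 : f₀ x ∈ f₀ '' X := ⟨x, hx, rfl⟩
    have h3 : K₁ (f₀ x) = φ (f₀ x) := (hK₁eq h2).symm
    obtain ⟨hxX, hfeq⟩ := hφ _ h2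
    have h4 := (hbi ⟨φ (f₀ x), hxX⟩ ⟨x, hx⟩).1
    rw [← hf0X _ hxX, ← hf0X _ hx, hfeq, dist_self] at h4
    have h5 : dist (φ (f₀ x)) x = 0 := le_antisymm (by nlinarith [dist_nonneg (x := φ (f₀ x)) (y := x)]) dist_nonneg
    have h6 : φ (f₀ x) = x := by rwa [dist_eq_zero] at h5
    rw [h1, h3, h6]
  -- the extension
  set c : ℝ := s / Real.sqrt 2 with hc
  have h2s : Real.sqrt 2 ^ 2 = 2 := Real.sq_sqrt (by norm_num)
  have h3s : Real.sqrt 3 ^ 2 = 3 := Real.sq_sqrt (by norm_num)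
  have h2p : (0:ℝ) < Real.sqrt 2 := Real.sqrt_pos.2 (by norm_num)
  have h3p : (0:ℝ) < Real.sqrt 3 := Real.sqrt_pos.2 (by norm_num)
  have hcpos : 0 < c := div_pos hs h2p
  set f' : (EuclideanSpace ℝ (Fin n)) → WithLp 2 ((EuclideanSpace ℝ (Fin m)) × (EuclideanSpace ℝ (Fin n))) :=
    fun x => (WithLp.equiv 2 ((EuclideanSpace ℝ (Fin m)) × (EuclideanSpace ℝ (Fin n)))).symm (F₁ x, c • (x - K₁ (F₁ x))) with hf'
  refine ⟨f', ⟨s / Real.sqrt 3, div_pos hs h3p, fun a b => ?_⟩, fun x hx => ?_⟩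
  swap
  · -- extension property
    have e2 : c • (x - K₁ (F₁ x)) = 0 := by rw [hinv x hx, sub_self, smul_zero]
    have e1 : F₁ x = f ⟨x, hx⟩ := by rw [← hf0X x hx]; exact (hF₁eq hx).symm
    show (WithLp.equiv 2 ((EuclideanSpace ℝ (Fin m)) × (EuclideanSpace ℝ (Fin n)))).symm
        (F₁ x, c • (x - K₁ (F₁ x))) = _
    rw [e2, e1]
  -- bi-Lipschitz bounds
  set d := dist a b with hd
  set A := dist (F₁ a) (F₁ b) with hA
  set u := K₁ (F₁ a) with hu
  set v := K₁ (F₁ b) with hv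
  set B := dist (c • (a - u)) (c • (b - v)) with hB
  have hdistf : dist (f' a) (f' b) = Real.sqrt (A^2 + B^2) := by
    rw [hf', WithLp.prod_dist_eq_of_L2]
    simp only [WithLp.equiv_symm_apply, WithLp.toLp_fst, WithLp.toLp_snd]
    rfl
  have hdpos : 0 ≤ d := dist_nonneg
  have hApos : 0 ≤ A := dist_nonneg
  have hBpos : 0 ≤ B := dist_nonneg
  have hAup : A ≤ D * s * d := hF₁lip.dist_le_mul a b
  have hKab : dist u v ≤ s⁻¹ * A := hK₁lip.dist_le_mul (F₁ a) (F₁ b)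
  have hBc : B = c * dist (a - u) (b - v) := by
    rw [hB, dist_smul₀, Real.norm_eq_abs, abs_of_pos hcpos]
  have hsB : Real.sqrt 2 * B = s * dist (a - u) (b - v) := by
    rw [hBc, ← mul_assoc, hc, mul_div_cancel₀ s h2p.ne']
  have htri1 : d ≤ dist (a - u) (b - v) + dist u v := by
    rw [hd, dist_eq_norm, dist_eq_norm, dist_eq_norm]
    have e : a - b = ((a - u) - (b - v)) + (u - v) := by abel
    rw [e]
    exact norm_add_le _ _
  have htri2 : dist (a - u) (b - v) ≤ d + dist u v := by
    rw [hd, dist_eq_norm, dist_eq_norm, dist_eq_norm]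
    have e : (a - u) - (b - v) = (a - b) - (u - v) := by abel
    rw [e]
    exact norm_sub_le _ _
  have hsinv : s * (s⁻¹ * A) = A := by field_simp
  have hlowB : s * d - A ≤ Real.sqrt 2 * B := by
    rw [hsB]
    have h1 := mul_le_mul_of_nonneg_left htri1 hs.le
    have h2 := mul_le_mul_of_nonneg_left hKab hs.le
    rw [mul_add] at h1
    linarith [hsinv]
  have hupB : Real.sqrt 2 * B ≤ s * d + D * s * d := by
    rw [hsB]
    have h1 := mul_le_mul_of_nonneg_left htri2 hs.le
    have h2 := mul_le_mul_of_nonneg_left hKab hs.le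
    rw [mul_add] at h1
    nlinarith [hsinv, hAup, hs.le]
  clear_value d A u v B
  constructor
  · rw [hdistf]
    exact lower_num s d A B (Real.sqrt 2) (Real.sqrt 3) hs hdpos hApos hBpos h2s h3s h2p h3p hlowB
  · rw [hdistf]
    exact upper_num D s d A B (Real.sqrt 2) (Real.sqrt 3) hs hD hdpos hApos hBpos h2s h3s h2p h3p
      hAup hupB
end

section
/- Let 0 < α < 1, k ∈ ℕ, and let X be a metric space that is free of k-point SRA(α)-subspaces. Suppose {x₁,…,x_{k−1}} ⊆ X, with the induced metric, satisfies the SRA(α/2)-condition, and let R = min_{1 ≤ i < j ≤ k−1} d(xᵢ,xⱼ). Then the ball B_{αR/6}(x₁) admits an embedding into ℝ^{k−2} with bi-Lipschitz distortion at most √(k−2)/α; moreover the map φ : X → ℝ^{k−2} defined by φᵢ(y) = d(y, x_{i+1}) realizes this: it is √(k−2)-Lipschitz and satisfies ‖φ(y₁)−φ(y₂)‖ ≥ α·d(y₁,y₂) for all y₁,y₂ ∈ B_{αR/6}(x₁). -/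
/-!
Each coordinate `y ↦ d(y, x (i+1))` of `φ` is 1-Lipschitz, which gives the upper bound. For the
lower bound take distinct `y₁, y₂` in the ball: the `n + 2` points `y₁, y₂, x 1, …, x n` contain a
triple `(p, z, q)` violating `SRA(α)`, i.e. with positive defect
`d(p,q) - max (d(p,z) + α d(z,q)) (α d(p,z) + d(z,q))`. The defect is 2-Lipschitz in an endpoint,
`(1+α)`-Lipschitz in the middle point, and drops by `α/2 · min (d(p,z)) (d(z,q))` when `α/2` is
replaced by `α`. As the `x i` are `R`-separated and satisfy `SRA(α/2)`, replacing `x 0` by a point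
of the ball therefore creates no violation, and a triple with both ends in the ball and an anchor in
the middle is too short to be one. What remains is a violating triple `(yₐ, y_b, x i)`, which says
`α d(y₁,y₂) < |d(y₁, x i) - d(y₂, x i)|`, a single coordinate of `φ y₁ - φ y₂`.
-/

open Metric Set

/-- A subset `Y` of a metric space satisfies the `SRA(β)`-condition. -/
def SRAOn {X : Type*} [MetricSpace X] (β : ℝ) (Y : Set X) : Prop :=
  ∀ a ∈ Y, ∀ b ∈ Y, ∀ c ∈ Y,
    dist a b ≤ max (dist a c + β * dist c b) (β * dist a c + dist c b)

/-- A subset `S` of a metric space is free of `k`-point `SRA(β)`-subspaces: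
every `k`-point subset contains `x, z, y` with
`d(x,y) > max (d(x,z) + β d(z,y)) (β d(x,z) + d(z,y))`. -/
def SRAFree {X : Type*} [MetricSpace X] (k : ℕ) (β : ℝ) (S : Set X) : Prop :=
  ∀ Y : Finset X, ↑Y ⊆ S → Y.card = k →
    ∃ x ∈ Y, ∃ z ∈ Y, ∃ y ∈ Y,
      dist x y > max (dist x z + β * dist z y) (β * dist x z + dist z y)

noncomputable def sraDefect {X : Type*} [MetricSpace X] (β : ℝ) (p z q : X) : ℝ :=
  dist p q - max (dist p z + β * dist z q) (β * dist p z + dist z q)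

section sraDefect

variable {X : Type*} [MetricSpace X] {β γ ρ R : ℝ} {a b c p q z : X}

theorem sraDefect_comm (β : ℝ) (p z q : X) : sraDefect β p z q = sraDefect β q z p := by
  simp only [sraDefect, dist_comm q p, dist_comm q z, dist_comm z p, max_comm, add_comm]

theorem ne_of_sraDefect_pos (hβ : 0 ≤ β) (h : 0 < sraDefect β p z q) :
    p ≠ z ∧ z ≠ q ∧ p ≠ q := by
  unfold sraDefect at h
  refine ⟨?_, ?_, ?_⟩ <;> rintro rfl <;> simp only [dist_self, mul_zero, zero_add, add_zero] at h
  · linarith [le_max_right (β * dist p q) (dist p q)]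
  · linarith [le_max_left (dist p z) (β * dist p z)]
  · linarith [le_max_left (dist p z + β * dist z p) (β * dist p z + dist z p),
      mul_nonneg hβ (dist_nonneg (x := z) (y := p)), dist_nonneg (x := p) (y := z)]

theorem sraDefect_add_mul_min_le (hγβ : γ ≤ β) (p z q : X) :
    sraDefect β p z q + (β - γ) * min (dist p z) (dist z q) ≤ sraDefect γ p z q := by
  have hB := mul_le_mul_of_nonneg_left (min_le_right (dist p z) (dist z q)) (sub_nonneg.2 hγβ)
  have hA := mul_le_mul_of_nonneg_left (min_le_left (dist p z) (dist z q)) (sub_nonneg.2 hγβ)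
  unfold sraDefect
  have : max (dist p z + γ * dist z q) (γ * dist p z + dist z q) +
      (β - γ) * min (dist p z) (dist z q) ≤
      max (dist p z + β * dist z q) (β * dist p z + dist z q) := by
    rw [← max_add_add_right]
    exact max_le_max (by linarith) (by linarith)
  linarith

theorem sraDefect_anti (hγβ : γ ≤ β) (p z q : X) : sraDefect β p z q ≤ sraDefect γ p z q := by
  have := mul_nonneg (sub_nonneg.2 hγβ)
    (le_min (dist_nonneg (x := p) (y := z)) (dist_nonneg (x := z) (y := q)))
  linarith [sraDefect_add_mul_min_le hγβ p z q]

theorem sraDefect_le_add_of_left (hβ0 : 0 ≤ β) (hβ1 : β ≤ 1) (a c z q : X) :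
    sraDefect β a z q ≤ sraDefect β c z q + 2 * dist a c := by
  have hcz : dist c z ≤ dist a c + dist a z := dist_triangle_left c z a
  have hβcz : β * dist c z ≤ β * dist a z + dist a c := by nlinarith [dist_nonneg (x := a) (y := c)]
  have : max (dist c z + β * dist z q) (β * dist c z + dist z q) ≤
      max (dist a z + β * dist z q) (β * dist a z + dist z q) + dist a c := by
    rw [← max_add_add_right]
    exact max_le_max (by linarith) (by linarith)
  unfold sraDefect
  linarith [dist_triangle a c q]

theorem sraDefect_le_add_of_middle (hβ : 0 ≤ β) (p a c q : X) :
    sraDefect β p a q ≤ sraDefect β p c q + (1 + β) * dist a c := by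
  have hpc : dist p c ≤ dist p a + dist a c := dist_triangle p a c
  have hcq : dist c q ≤ dist a c + dist a q := dist_triangle_left c q a
  have := mul_le_mul_of_nonneg_left hpc hβ
  have := mul_le_mul_of_nonneg_left hcq hβ
  have : max (dist p c + β * dist c q) (β * dist p c + dist c q) ≤
      max (dist p a + β * dist a q) (β * dist p a + dist a q) + (1 + β) * dist a c := by
    rw [← max_add_add_right]
    exact max_le_max (by linarith) (by linarith)
  unfold sraDefect
  linarith

theorem sraDefect_nonpos_of_dist_le_left (hβ0 : 0 ≤ β) (hβ1 : β ≤ 1)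
    (hc : sraDefect (β / 2) c z q ≤ 0) (hcz : R ≤ dist c z) (hzq : R ≤ dist z q)
    (ha : dist a c ≤ β * R / 4) : sraDefect β a z q ≤ 0 := by
  have hgain := sraDefect_add_mul_min_le (by linarith : β / 2 ≤ β) c z q
  have := mul_le_mul_of_nonneg_left (le_min hcz hzq) (by linarith : 0 ≤ β - β / 2)
  linarith [sraDefect_le_add_of_left hβ0 hβ1 a c z q]

theorem sraDefect_nonpos_of_dist_le_middle (hβ0 : 0 ≤ β) (hβ1 : β ≤ 1)
    (hc : sraDefect (β / 2) p c q ≤ 0) (hpc : R ≤ dist p c) (hcq : R ≤ dist c q)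
    (ha : dist a c ≤ β * R / 4) : sraDefect β p a q ≤ 0 := by
  have hgain := sraDefect_add_mul_min_le (by linarith : β / 2 ≤ β) p c q
  have := mul_le_mul_of_nonneg_left (le_min hpc hcq) (by linarith : 0 ≤ β - β / 2)
  have := mul_le_mul_of_nonneg_left ha (by linarith : 0 ≤ 1 - β)
  nlinarith [sraDefect_le_add_of_middle hβ0 p a c q, dist_nonneg (x := a) (y := c)]

theorem sraDefect_nonpos_of_dist_le_ends (hβ : 0 ≤ β) (hz : R ≤ dist c z)
    (ha : dist a c ≤ ρ) (hb : dist b c ≤ ρ) (hρ : 3 * ρ ≤ R) : sraDefect β a z b ≤ 0 := by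
  have := mul_nonneg hβ (dist_nonneg (x := z) (y := b))
  have := le_max_left (dist a z + β * dist z b) (β * dist a z + dist z b)
  unfold sraDefect
  linarith [dist_triangle_right a b c, dist_triangle_left c z a]

theorem mul_dist_lt_abs_dist_sub_dist (h : 0 < sraDefect β a b c) :
    β * dist a b < |dist a c - dist b c| := by
  have := le_max_right (dist a b + β * dist b c) (β * dist a b + dist b c)
  unfold sraDefect at h
  linarith [le_abs_self (dist a c - dist b c)]

end sraDefect

section distMap

variable {X ι : Type*} [MetricSpace X]

noncomputable def distMap (p : ι → X) (y : X) : EuclideanSpace ℝ ι :=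
  WithLp.toLp 2 fun i => dist y (p i)

variable [Fintype ι]

theorem abs_dist_sub_dist_le_dist_distMap (p : ι → X) (y z : X) (i : ι) :
    |dist y (p i) - dist z (p i)| ≤ dist (distMap p y) (distMap p z) := by
  simpa [distMap, Real.dist_eq] using PiLp.dist_apply_le (distMap p y) (distMap p z) i

theorem dist_distMap_le (p : ι → X) (y z : X) :
    dist (distMap p y) (distMap p z) ≤ √(Fintype.card ι) * dist y z := by
  rw [EuclideanSpace.dist_eq]
  calc √(∑ i, dist (distMap p y i) (distMap p z i) ^ 2) ≤ √(∑ _i : ι, dist y z ^ 2) := by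
        gcongr with i
        simpa [distMap, Real.dist_eq] using abs_dist_sub_le y z (p i)
    _ = √(Fintype.card ι) * dist y z := by
        rw [Finset.sum_const, Finset.card_univ, nsmul_eq_mul,
          Real.sqrt_mul (Nat.cast_nonneg _), Real.sqrt_sq dist_nonneg]

end distMap

section anchors

variable {X : Type*} [MetricSpace X] {n : ℕ} {α R : ℝ} {x : Fin (n + 1) → X}

theorem card_pair_union_image_succ [DecidableEq X] (hsep : ∀ i j, i ≠ j → R ≤ dist (x i) (x j))
    {y₁ y₂ : X} (hy₁ : y₁ ∈ ball (x 0) R) (hy₂ : y₂ ∈ ball (x 0) R) (hne : y₁ ≠ y₂) :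
    ({y₁, y₂} ∪ Finset.univ.image fun i : Fin n => x i.succ).card = n + 2 := by
  have hR : 0 < R := pos_of_mem_ball hy₁
  have hinj : Function.Injective fun i : Fin n => x i.succ := by
    intro i j hij
    by_contra h
    have := hsep _ _ ((Fin.succ_injective n).ne h)
    simp only [hij, dist_self] at this
    linarith
  have hdisj : Disjoint ({y₁, y₂} : Finset X) (Finset.univ.image fun i : Fin n => x i.succ) := by
    simp only [Finset.disjoint_left, Finset.mem_insert, Finset.mem_singleton, Finset.mem_image,
      Finset.mem_univ, true_and, not_exists]
    rintro a ha i rfl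
    have hfar := hsep 0 i.succ (Fin.succ_ne_zero i).symm
    rcases ha with rfl | rfl
    exacts [(mem_ball'.1 hy₁).not_ge hfar, (mem_ball'.1 hy₂).not_ge hfar]
  rw [Finset.card_union_of_disjoint hdisj, Finset.card_pair hne,
    Finset.card_image_of_injective _ hinj, Finset.card_univ, Fintype.card_fin, add_comm]

theorem exists_lt_abs_dist_sub_dist (hα : 0 < α) (hα1 : α < 1)
    (hfree : SRAFree (n + 2) α (univ : Set X))
    (hSRA : ∀ i j l, sraDefect (α / 2) (x i) (x l) (x j) ≤ 0)
    (hsep : ∀ i j, i ≠ j → R ≤ dist (x i) (x j))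
    {y₁ y₂ : X} (hy₁ : y₁ ∈ ball (x 0) (α * R / 6)) (hy₂ : y₂ ∈ ball (x 0) (α * R / 6))
    (hne : y₁ ≠ y₂) :
    ∃ i : Fin n, α * dist y₁ y₂ < |dist y₁ (x i.succ) - dist y₂ (x i.succ)| := by
  classical
  have hR : 0 < R := (mul_pos_iff_of_pos_left hα).1 (by linarith [pos_of_mem_ball hy₁])
  have hr : α * R / 6 ≤ α * R / 4 := by linarith [mul_pos hα hR]
  have hr3 : 3 * (α * R / 6) ≤ R := by nlinarith
  have hfar (i : Fin n) : R ≤ dist (x 0) (x i.succ) := hsep _ _ (Fin.succ_ne_zero i).symm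
  set Y : Finset X := {y₁, y₂}
  have hball : ∀ a ∈ Y, dist a (x 0) < α * R / 6 := by
    simp only [Y, Finset.mem_insert, Finset.mem_singleton]
    rintro a (rfl | rfl)
    exacts [hy₁, hy₂]
  have hcard : (Y ∪ Finset.univ.image fun i : Fin n => x i.succ).card = n + 2 :=
    card_pair_union_image_succ hsep (ball_subset_ball (by linarith) hy₁)
      (ball_subset_ball (by linarith) hy₂) hne
  have hpair : ∀ a ∈ Y, ∀ b ∈ Y, a ≠ b → ∀ c : X,
      α * dist a b < |dist a c - dist b c| → α * dist y₁ y₂ < |dist y₁ c - dist y₂ c| := by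
    simp only [Y, Finset.mem_insert, Finset.mem_singleton]
    rintro a (rfl | rfl) b (rfl | rfl) hab c h
    · exact absurd rfl hab
    · exact h
    · rwa [dist_comm, abs_sub_comm]
    · exact absurd rfl hab
  have hsucc {i j : Fin n} (h : x i.succ ≠ x j.succ) : i.succ ≠ j.succ := fun e => h (congrArg x e)
  obtain ⟨p, hp, z, hz, q, hq, hpos⟩ := hfree _ (subset_univ _) hcard
  simp only [Finset.mem_union, Finset.mem_image, Finset.mem_univ, true_and] at hp hz hq
  replace hpos : 0 < sraDefect α p z q := sub_pos.2 hpos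
  obtain ⟨hpz, hzq, hpq⟩ := ne_of_sraDefect_pos hα.le hpos
  rcases hp with hpY | ⟨i, rfl⟩ <;> rcases hz with hzY | ⟨l, rfl⟩ <;> rcases hq with hqY | ⟨j, rfl⟩
  · simp only [Y, Finset.mem_insert, Finset.mem_singleton] at hpY hzY hqY
    rcases hpY with rfl | rfl <;> rcases hzY with rfl | rfl <;> rcases hqY with rfl | rfl <;>
      simp_all
  · exact ⟨j, hpair p hpY z hzY hpz _ (mul_dist_lt_abs_dist_sub_dist hpos)⟩
  · exact absurd hpos (sraDefect_nonpos_of_dist_le_ends hα.le (hfar l) (hball p hpY).le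
      (hball q hqY).le hr3).not_gt
  · exact absurd hpos (sraDefect_nonpos_of_dist_le_left hα.le hα1.le (hSRA 0 j.succ l.succ)
      (hfar l) (hsep _ _ (hsucc hzq)) ((hball p hpY).le.trans hr)).not_gt
  · rw [sraDefect_comm] at hpos
    exact ⟨i, hpair q hqY z hzY hzq.symm _ (mul_dist_lt_abs_dist_sub_dist hpos)⟩
  · exact absurd hpos (sraDefect_nonpos_of_dist_le_middle hα.le hα1.le (hSRA i.succ j.succ 0)
      (by rw [dist_comm]; exact hfar i) (hfar j) ((hball z hzY).le.trans hr)).not_gt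
  · rw [sraDefect_comm] at hpos
    exact absurd hpos (sraDefect_nonpos_of_dist_le_left hα.le hα1.le (hSRA 0 i.succ l.succ)
      (hfar l) (hsep _ _ (hsucc hpz.symm)) ((hball q hqY).le.trans hr)).not_gt
  · exact absurd hpos
      ((sraDefect_anti (by linarith) _ _ _).trans (hSRA i.succ j.succ l.succ)).not_gt

end anchors

theorem stmt_4 {X : Type*} [MetricSpace X] (n : ℕ) (α : ℝ) (hα : 0 < α) (hα1 : α < 1)
    (hfree : SRAFree (n + 2) α (univ : Set X))
    (x : Fin (n + 1) → X)
    (hSRA : ∀ i j l : Fin (n + 1), dist (x i) (x j) ≤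
      max (dist (x i) (x l) + α / 2 * dist (x l) (x j))
        (α / 2 * dist (x i) (x l) + dist (x l) (x j)))
    (R : ℝ)
    (hR : IsLeast {d : ℝ | ∃ i j : Fin (n + 1), i ≠ j ∧ d = dist (x i) (x j)} R)
    (φ : X → EuclideanSpace ℝ (Fin n))
    (hφ : ∀ y : X, φ y = (WithLp.equiv 2 (Fin n → ℝ)).symm fun i => dist y (x i.succ)) :
    (∀ y z : X, dist (φ y) (φ z) ≤ Real.sqrt n * dist y z) ∧
    ∀ y₁ ∈ ball (x 0) (α * R / 6), ∀ y₂ ∈ ball (x 0) (α * R / 6),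
      α * dist y₁ y₂ ≤ dist (φ y₁) (φ y₂) := by
  obtain rfl : φ = distMap fun i : Fin n => x i.succ := funext hφ
  refine ⟨fun y z => by simpa using dist_distMap_le (fun i : Fin n => x i.succ) y z, ?_⟩
  intro y₁ hy₁ y₂ hy₂
  rcases eq_or_ne y₁ y₂ with rfl | hne
  · simp
  obtain ⟨i, hi⟩ := exists_lt_abs_dist_sub_dist hα hα1 hfree
    (fun i j l => sub_nonpos.2 (hSRA i j l)) (fun i j hij => hR.2 ⟨i, j, hij, rfl⟩) hy₁ hy₂ hne
  exact hi.le.trans (abs_dist_sub_dist_le_dist_distMap (fun i : Fin n => x i.succ) y₁ y₂ i)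
end

section
/- Let 0 < α < 1 and let X be a metric space free of k-point SRA(α)-subspaces. Suppose {x₁,…,x_{k−1}} ⊆ X satisfies the SRA(α/2)-condition, R = min_{i<j} d(xᵢ,xⱼ), and y₁, y₂ ∈ B_{αR/6}(x₁). If |d(y₁,x_m) − d(y₂,x_m)| < α·d(y₁,y₂) for every m ∈ {2,…,k−1}, then the k-point set {y₁, y₂, x₂, …, x_{k−1}} satisfies the SRA(α)-condition (contradicting the freeness hypothesis; hence such y₁,y₂ cannot exist with y₁ ≠ y₂). -/
/-!
A triple of `x`'s is an `SRA(α/2)`-triple, hence an `SRA(α)`-triple. In a triple made of `y₁`, `y₂`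
and some `x_m`, either `x_m` is the center, and then `y₁, y₂` are much closer to each other than
to `x_m`, or a `y` is the center, and then the inequality is the hypothesis
`|d(y₁, x_m) - d(y₂, x_m)| < α d(y₁, y₂)`. A triple with a single `y` comes from an
`SRA(α/2)`-triple containing `x₁` by moving `x₁` to that `y`, a distance `r < αR/6`; the error is
absorbed by the slack `(α - α/2) R` gained by passing from `α/2` to `α`, because `3r ≤ (α - α/2) R`.
-/

open Metric Set

def SRATriple {X : Type*} [MetricSpace X] (β : ℝ) (a b c : X) : Prop :=
  dist a b ≤ max (dist a c + β * dist c b) (β * dist a c + dist c b)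

namespace SRATriple

variable {X : Type*} [MetricSpace X] {β γ r : ℝ} {a b c p u v : X}

theorem symm (h : SRATriple β a b c) : SRATriple β b a c := by
  unfold SRATriple at *
  rw [dist_comm b a, dist_comm b c, dist_comm c a]
  rcases le_max_iff.mp h with h | h
  · exact le_max_of_le_right (by linarith)
  · exact le_max_of_le_left (by linarith)

theorem mono (hβγ : β ≤ γ) (h : SRATriple β a b c) : SRATriple γ a b c := by
  unfold SRATriple at *
  have hac := mul_le_mul_of_nonneg_right hβγ (dist_nonneg (x := a) (y := c))
  have hcb := mul_le_mul_of_nonneg_right hβγ (dist_nonneg (x := c) (y := b))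
  exact h.trans (max_le_max (by linarith) (by linarith))

theorem self_left (hβ : 0 ≤ β) : SRATriple β a a c := by
  unfold SRATriple
  rw [dist_self]
  exact le_max_of_le_left (add_nonneg dist_nonneg (mul_nonneg hβ dist_nonneg))

theorem center_left : SRATriple β a b a := by
  simp [SRATriple]

theorem center_right : SRATriple β a b b := by
  simp [SRATriple]

theorem of_abs_dist_sub_le (h : |dist a b - dist c b| ≤ β * dist a c) : SRATriple β a b c :=
  le_max_of_le_right (by linarith [(abs_le.mp h).2])

theorem of_abs_dist_sub_le_swap (h : |dist a b - dist c b| ≤ β * dist a c) :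
    SRATriple β c b a :=
  of_abs_dist_sub_le (by rwa [abs_sub_comm, dist_comm c a])

theorem of_dist_le_of_dist_le {q : X} (hβ : 0 ≤ β) (hu : dist u p ≤ r) (hv : dist v p ≤ r)
    (hq : 3 * r ≤ dist p q) : SRATriple β u v q := by
  have huv := dist_triangle_right u v p
  have hpq := dist_triangle_left p q u
  exact le_max_of_le_left (by nlinarith [dist_nonneg (x := q) (y := v)])

theorem perturb_left (h : SRATriple γ p b c) (hγ : 0 ≤ γ) (hγβ : γ ≤ β) (hu : dist u p ≤ r)
    (hcb : 2 * r ≤ (β - γ) * dist c b) (hpc : (1 + β) * r ≤ (β - γ) * dist p c) :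
    SRATriple β u b c := by
  have hub := dist_triangle u p b
  have hpc' := dist_triangle_left p c u
  have hup := dist_comm u p
  have hpc'' : (β - γ) * dist p c ≤ (β - γ) * (dist u c + r) :=
    mul_le_mul_of_nonneg_left (by linarith) (by linarith)
  have hγpc : γ * dist p c ≤ γ * (dist u c + r) := mul_le_mul_of_nonneg_left (by linarith) hγ
  rcases le_max_iff.mp h with h | h
  · exact le_max_of_le_left (by nlinarith)
  · exact le_max_of_le_right (by nlinarith)

theorem perturb_center (h : SRATriple γ a b p) (hγ : 0 ≤ γ) (hγβ : γ ≤ β) (hu : dist u p ≤ r)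
    (hap : (1 + β) * r ≤ (β - γ) * dist a p) (hpb : (1 + β) * r ≤ (β - γ) * dist p b) :
    SRATriple β a b u := by
  have hau := dist_triangle a u p
  have hub := dist_triangle p u b
  have hup := dist_comm u p
  have hap' : (β - γ) * dist a p ≤ (β - γ) * (dist a u + r) :=
    mul_le_mul_of_nonneg_left (by linarith) (by linarith)
  have hpb' : (β - γ) * dist p b ≤ (β - γ) * (dist u b + r) :=
    mul_le_mul_of_nonneg_left (by linarith) (by linarith)
  have hγap : γ * dist a p ≤ γ * (dist a u + r) := mul_le_mul_of_nonneg_left (by linarith) hγ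
  have hγpb : γ * dist p b ≤ γ * (dist u b + r) := mul_le_mul_of_nonneg_left (by linarith) hγ
  rcases le_max_iff.mp h with h | h
  · exact le_max_of_le_left (by nlinarith)
  · exact le_max_of_le_right (by nlinarith)

end SRATriple

theorem SRAOn.triple {X : Type*} [MetricSpace X] {β : ℝ} {Y : Set X} {a b c : X}
    (h : SRAOn β Y) (ha : a ∈ Y) (hb : b ∈ Y) (hc : c ∈ Y) : SRATriple β a b c :=
  h a ha b hb c hc

theorem sraOn_of_ne {X : Type*} [MetricSpace X] {β : ℝ} {Y : Set X} (hβ : 0 ≤ β)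
    (h : ∀ a ∈ Y, ∀ b ∈ Y, ∀ c ∈ Y, a ≠ b → a ≠ c → b ≠ c → SRATriple β a b c) :
    SRAOn β Y := by
  intro a ha b hb c hc
  by_cases hab : a = b
  · subst hab; exact SRATriple.self_left hβ
  by_cases hac : a = c
  · subst hac; exact SRATriple.center_left
  by_cases hbc : b = c
  · subst hbc; exact SRATriple.center_right
  exact h a ha b hb c hc hab hac hbc

theorem sraOn_pair_union {X : Type*} [MetricSpace X] {β : ℝ} {y₁ y₂ : X} {Q : Set X}
    (hβ : 0 ≤ β) (hQ : SRAOn β Q)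
    (hyyq : ∀ u ∈ ({y₁, y₂} : Set X), ∀ v ∈ ({y₁, y₂} : Set X), ∀ q ∈ Q, SRATriple β u v q)
    (hyqy : ∀ u ∈ ({y₁, y₂} : Set X), ∀ v ∈ ({y₁, y₂} : Set X), u ≠ v → ∀ q ∈ Q,
      SRATriple β u q v)
    (hyqq : ∀ u ∈ ({y₁, y₂} : Set X), ∀ q ∈ Q, ∀ q' ∈ Q, q ≠ q' → SRATriple β u q q')
    (hqqy : ∀ q ∈ Q, ∀ q' ∈ Q, ∀ u ∈ ({y₁, y₂} : Set X), SRATriple β q q' u) :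
    SRAOn β ({y₁, y₂} ∪ Q) := by
  refine sraOn_of_ne hβ fun a ha b hb c hc hab hac hbc => ?_
  rcases ha with ha | ha <;> rcases hb with hb | hb <;> rcases hc with hc | hc
  · simp only [mem_insert_iff, mem_singleton_iff] at ha hb hc
    rcases ha with rfl | rfl <;> rcases hb with rfl | rfl <;> rcases hc with rfl | rfl <;>
      contradiction
  · exact hyyq a ha b hb c hc
  · exact hyqy a ha c hc hac b hb
  · exact hyqq a ha b hb c hc hbc
  · exact (hyqy b hb c hc hbc a ha).symm
  · exact (hyqq b hb a ha c hc hac).symm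
  · exact hqqy a ha b hb c hc
  · exact hQ a ha b hb c hc

theorem sraOn_pair_union_of_near {X : Type*} [MetricSpace X] {β γ r : ℝ} {p y₁ y₂ : X}
    {Q : Set X} (hγ : 0 ≤ γ) (hγβ : γ ≤ β) (hβ1 : β ≤ 1) (hQ : SRAOn γ (insert p Q)) (hpQ : p ∉ Q)
    (hsep : ∀ q ∈ insert p Q, ∀ q' ∈ insert p Q, q ≠ q' → 3 * r ≤ (β - γ) * dist q q')
    (hy₁ : dist y₁ p ≤ r) (hy₂ : dist y₂ p ≤ r)
    (hnd : ∀ q ∈ Q, |dist y₁ q - dist y₂ q| ≤ β * dist y₁ y₂) :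
    SRAOn β ({y₁, y₂} ∪ Q) := by
  have hQp : Q ⊆ insert p Q := subset_insert p Q
  have hp : p ∈ insert p Q := mem_insert p Q
  have hr : 0 ≤ r := dist_nonneg.trans hy₁
  have hnear : ∀ u ∈ ({y₁, y₂} : Set X), dist u p ≤ r := by
    rintro u (rfl | rfl)
    exacts [hy₁, hy₂]
  have hpq : ∀ q ∈ Q, 3 * r ≤ (β - γ) * dist p q := fun q hq =>
    hsep p hp q (hQp hq) (ne_of_mem_of_not_mem hq hpQ).symm
  have hβγ : β - γ ≤ 1 := by linarith
  have hslack : ∀ {d}, 3 * r ≤ (β - γ) * d → 2 * r ≤ (β - γ) * d ∧ (1 + β) * r ≤ (β - γ) * d :=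
    fun hd => ⟨by linarith, by nlinarith⟩
  apply sraOn_pair_union (hγ.trans hγβ)
  · exact fun a ha b hb c hc => (hQ.triple (hQp ha) (hQp hb) (hQp hc)).mono hγβ
  · intro u hu v hv q hq
    have hd := hpq q hq
    have : (β - γ) * dist p q ≤ dist p q := by nlinarith [dist_nonneg (x := p) (y := q)]
    exact .of_dist_le_of_dist_le (hγ.trans hγβ) (hnear u hu) (hnear v hv) (by linarith)
  · rintro u (rfl | rfl) v (rfl | rfl) huv q hq
    · exact absurd rfl huv
    · exact .of_abs_dist_sub_le (hnd q hq)
    · exact .of_abs_dist_sub_le_swap (hnd q hq)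
    · exact absurd rfl huv
  · intro u hu b hb c hc hbc
    exact (hQ.triple hp (hQp hb) (hQp hc)).perturb_left hγ hγβ (hnear u hu)
      (hslack (hsep c (hQp hc) b (hQp hb) hbc.symm)).1 (hslack (hpq c hc)).2
  · intro a ha b hb u hu
    have hap := hsep a (hQp ha) p hp (ne_of_mem_of_not_mem ha hpQ)
    exact (hQ.triple (hQp ha) (hQp hb) hp).perturb_center hγ hγβ (hnear u hu)
      (hslack hap).2 (hslack (hpq b hb)).2

theorem stmt_5_general {X : Type*} [MetricSpace X] (n : ℕ) (α : ℝ) (hα : 0 < α) (hα1 : α < 1)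
    (x : Fin (n + 1) → X)
    (hSRA : ∀ i j l : Fin (n + 1), dist (x i) (x j) ≤
      max (dist (x i) (x l) + α / 2 * dist (x l) (x j))
        (α / 2 * dist (x i) (x l) + dist (x l) (x j)))
    (R : ℝ)
    (hR : IsLeast {d : ℝ | ∃ i j : Fin (n + 1), i ≠ j ∧ d = dist (x i) (x j)} R)
    (y₁ y₂ : X)
    (hy₁ : y₁ ∈ ball (x 0) (α * R / 6)) (hy₂ : y₂ ∈ ball (x 0) (α * R / 6))
    (hnd : ∀ m : Fin n, |dist y₁ (x m.succ) - dist y₂ (x m.succ)| < α * dist y₁ y₂) :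
    SRAOn α ({y₁, y₂} ∪ range fun i : Fin n => x i.succ) := by
  have hrange : range x = insert (x 0) (range fun i : Fin n => x i.succ) := Fin.range_fin_succ x
  have hsep : ∀ i j, i ≠ j → R ≤ dist (x i) (x j) := fun i j hij => hR.2 ⟨i, j, hij, rfl⟩
  have hR₀ : 0 < R :=
    pos_of_mul_pos_right (by linarith [dist_nonneg (x := y₁) (y := x 0), mem_ball.mp hy₁]) hα.le
  refine sraOn_pair_union_of_near (γ := α / 2) (by positivity) (by linarith) hα1.le ?_ ?_ ?_
    (mem_ball.mp hy₁).le (mem_ball.mp hy₂).le ?_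
  · rw [← hrange]
    rintro _ ⟨i, rfl⟩ _ ⟨j, rfl⟩ _ ⟨l, rfl⟩
    exact hSRA i j l
  · rintro ⟨i, hi : x i.succ = x 0⟩
    have := hsep _ _ (Fin.succ_ne_zero i)
    rw [hi, dist_self] at this
    linarith
  · rw [← hrange]
    rintro _ ⟨i, rfl⟩ _ ⟨j, rfl⟩ hij
    nlinarith [hsep i j (fun h => hij (congrArg x h))]
  · rintro _ ⟨m, rfl⟩
    exact (hnd m).le

theorem stmt_5 {X : Type*} [MetricSpace X] (n : ℕ) (α : ℝ) (hα : 0 < α) (hα1 : α < 1)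
    (hfree : SRAFree (n + 2) α (univ : Set X))
    (x : Fin (n + 1) → X)
    (hSRA : ∀ i j l : Fin (n + 1), dist (x i) (x j) ≤
      max (dist (x i) (x l) + α / 2 * dist (x l) (x j))
        (α / 2 * dist (x i) (x l) + dist (x l) (x j)))
    (R : ℝ)
    (hR : IsLeast {d : ℝ | ∃ i j : Fin (n + 1), i ≠ j ∧ d = dist (x i) (x j)} R)
    (y₁ y₂ : X)
    (hy₁ : y₁ ∈ ball (x 0) (α * R / 6)) (hy₂ : y₂ ∈ ball (x 0) (α * R / 6))
    (hnd : ∀ m : Fin n, |dist y₁ (x m.succ) - dist y₂ (x m.succ)| < α * dist y₁ y₂) :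
    SRAOn α ({y₁, y₂} ∪ range fun i : Fin n => x i.succ) :=
  stmt_5_general n α hα hα1 x hSRA R hR y₁ y₂ hy₁ hy₂ hnd
end

section
/- Let 0 < α < 1 and let X be a metric space free of 3-point SRA(α)-subspaces with finite diameter. Let {x₁,…,x_n} be a maximal (diam(X)/10)-separated subset of X, and define φ : X → ℝⁿ by φᵢ(y) = d(y, xᵢ). Then φ is √n-Lipschitz and for every y₁,y₂ ∈ X there exists i with |φᵢ(y₁) − φᵢ(y₂)| ≥ min{1/10, α}·d(y₁,y₂); in particular φ is a bi-Lipschitz embedding with distortion at most √n·max{10, 1/α}. -/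
open Metric Set

lemma triple_lemma {X : Type*} [MetricSpace X] {α : ℝ} (hα : 0 < α)
    (hfree : SRAFree 3 α (univ : Set X)) (p u v : X)
    (hpu : p ≠ u) (hpv : p ≠ v) (huv : u ≠ v)
    (hfar : dist u v ≤ dist u p) :
    α * dist u v < |dist u p - dist v p| := by
  classical
  have hcard : ({p, u, v} : Finset X).card = 3 := by
    rw [Finset.card_insert_of_notMem (by simp [hpu, hpv]),
      Finset.card_insert_of_notMem (by simpa using huv), Finset.card_singleton]
  obtain ⟨a, ha, b, hb, c, hc, h⟩ := hfree {p, u, v} (by simp) hcard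
  obtain ⟨h1, h2⟩ := max_lt_iff.mp h
  have epu : dist p u = dist u p := dist_comm p u
  have epv : dist p v = dist v p := dist_comm p v
  have euv : dist u v = dist v u := dist_comm u v
  have apu : α * dist p u = α * dist u p := by rw [dist_comm]
  have apv : α * dist p v = α * dist v p := by rw [dist_comm]
  have auv : α * dist u v = α * dist v u := by rw [dist_comm]
  have n1 : 0 ≤ α * dist p u := mul_nonneg hα.le dist_nonneg
  have n2 : 0 ≤ α * dist p v := mul_nonneg hα.le dist_nonneg
  have n3 : 0 ≤ α * dist u v := mul_nonneg hα.le dist_nonneg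
  have d1 : (0:ℝ) ≤ dist p u := dist_nonneg
  have d2 : (0:ℝ) ≤ dist p v := dist_nonneg
  have d3 : (0:ℝ) ≤ dist u v := dist_nonneg
  simp only [Finset.mem_insert, Finset.mem_singleton] at ha hb hc
  rcases ha with rfl | rfl | rfl <;> rcases hb with rfl | rfl | rfl <;>
    rcases hc with rfl | rfl | rfl <;>
    (try simp only [dist_self, mul_zero, zero_mul, zero_add, add_zero] at h1 h2) <;>
    rw [lt_abs] <;>
    first
      | (left; linarith)
      | (right; linarith)
      | (exfalso; linarith)

theorem stmt_6 {X : Type*} [MetricSpace X] (α : ℝ) (hα : 0 < α) (hα1 : α < 1)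
    (hbdd : Bornology.IsBounded (univ : Set X))
    (hfree : SRAFree 3 α (univ : Set X))
    (n : ℕ) (x : Fin n → X) (hinj : Function.Injective x)
    (hsep : ∀ i j : Fin n, i ≠ j → diam (univ : Set X) / 10 ≤ dist (x i) (x j))
    (hmax : ∀ p : X, p ∉ range x → ∃ i, dist p (x i) < diam (univ : Set X) / 10)
    (φ : X → EuclideanSpace ℝ (Fin n))
    (hφ : ∀ y : X, φ y = (WithLp.equiv 2 (Fin n → ℝ)).symm fun i => dist y (x i)) :
    (∀ y z : X, dist (φ y) (φ z) ≤ Real.sqrt n * dist y z) ∧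
    ∀ y₁ y₂ : X, ∃ i : Fin n,
      min (1 / 10) α * dist y₁ y₂ ≤ |dist y₁ (x i) - dist y₂ (x i)| := by
  constructor
  · intro y z
    rw [hφ, hφ, EuclideanSpace.dist_eq]
    have hterm : ∀ i : Fin n,
        dist ((WithLp.equiv 2 (Fin n → ℝ)).symm (fun i => dist y (x i)) i)
          ((WithLp.equiv 2 (Fin n → ℝ)).symm (fun i => dist z (x i)) i) ^ 2
          ≤ dist y z ^ 2 := by
      intro i
      have h1 : |dist y (x i) - dist z (x i)| ≤ dist y z := abs_dist_sub_le y z (x i)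
      have h2 : dist ((WithLp.equiv 2 (Fin n → ℝ)).symm (fun i => dist y (x i)) i)
          ((WithLp.equiv 2 (Fin n → ℝ)).symm (fun i => dist z (x i)) i)
          = |dist y (x i) - dist z (x i)| := by
        simp [WithLp.equiv_symm_apply, Real.dist_eq]
      rw [h2]
      exact pow_le_pow_left₀ (abs_nonneg _) h1 2
    have hsum : (∑ i : Fin n,
        dist ((WithLp.equiv 2 (Fin n → ℝ)).symm (fun i => dist y (x i)) i)
          ((WithLp.equiv 2 (Fin n → ℝ)).symm (fun i => dist z (x i)) i) ^ 2)
        ≤ (n : ℝ) * dist y z ^ 2 := by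
      have h3 := Finset.sum_le_sum (fun i (_ : i ∈ Finset.univ) => hterm i)
      simpa [Finset.sum_const, Finset.card_univ, nsmul_eq_mul] using h3
    refine le_trans (Real.sqrt_le_sqrt hsum) ?_
    rw [Real.sqrt_mul (Nat.cast_nonneg n), Real.sqrt_sq dist_nonneg]
  · intro y₁ y₂
    set D := diam (univ : Set X) with hD
    have hD0 : 0 ≤ D := diam_nonneg
    have hmin1 : min (1/10 : ℝ) α ≤ 1/10 := min_le_left _ _
    have hminα : min (1/10 : ℝ) α ≤ α := min_le_right _ _
    have hd0 : 0 ≤ dist y₁ y₂ := dist_nonneg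
    -- get some index
    have hidx : ∀ w : X, ∃ i, dist w (x i) ≤ D / 10 := by
      intro w
      by_cases hw : w ∈ range x
      · obtain ⟨i, rfl⟩ := hw
        refine ⟨i, ?_⟩
        rw [dist_self]
        linarith
      · obtain ⟨i, hi⟩ := hmax w hw
        exact ⟨i, hi.le⟩
    by_cases hy : y₁ = y₂
    · obtain ⟨i, _⟩ := hidx y₁
      exact ⟨i, by subst hy; simp⟩
    have hdpos : 0 < dist y₁ y₂ := dist_pos.mpr hy
    by_cases hA : ∃ j, dist y₁ y₂ ≤ dist y₁ (x j)
    · obtain ⟨j, hj⟩ := hA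
      by_cases hjv : x j = y₂
      · refine ⟨j, ?_⟩
        rw [hjv, dist_self, sub_zero, abs_of_nonneg dist_nonneg]
        nlinarith
      · have hju : x j ≠ y₁ := fun h => by
          rw [h, dist_self] at hj; linarith
        have key := triple_lemma hα hfree (x j) y₁ y₂ hju hjv hy hj
        refine ⟨j, ?_⟩
        have : min (1/10 : ℝ) α * dist y₁ y₂ ≤ α * dist y₁ y₂ :=
          mul_le_mul_of_nonneg_right hminα hd0
        calc min (1/10 : ℝ) α * dist y₁ y₂ ≤ α * dist y₁ y₂ := this
          _ ≤ |dist y₁ (x j) - dist y₂ (x j)| := key.le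
      -- note: triple_lemma gives |dist u p - dist v p| with u=y₁,v=y₂,p=x j, i.e.
      -- |dist y₁ (x j) - dist y₂ (x j)|
    · push_neg at hA
      -- all net points are within dist y₁ y₂ of y₁; hence diam bound
      have hpy : ∀ p : X, dist p y₁ ≤ D / 10 + dist y₁ y₂ := by
        intro p
        by_cases hp : p ∈ range x
        · obtain ⟨j, rfl⟩ := hp
          have := hA j
          rw [dist_comm]
          linarith
        · obtain ⟨i, hi⟩ := hmax p hp
          have h2 := hA i
          calc dist p y₁ ≤ dist p (x i) + dist (x i) y₁ := dist_triangle _ _ _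
            _ ≤ D / 10 + dist y₁ y₂ := by rw [dist_comm (x i) y₁]; linarith
      have hDle : D ≤ D / 5 + 2 * dist y₁ y₂ := by
        apply diam_le_of_forall_dist_le (by linarith)
        intro p _ q _
        calc dist p q ≤ dist p y₁ + dist y₁ q := dist_triangle _ _ _
          _ ≤ D / 5 + 2 * dist y₁ y₂ := by
            have := hpy p; have h2 := hpy q; rw [dist_comm y₁ q]; linarith
      obtain ⟨i, hi⟩ := hidx y₁
      refine ⟨i, ?_⟩
      have htri : dist y₁ y₂ ≤ dist y₁ (x i) + dist y₂ (x i) := by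
        rw [dist_comm y₂ (x i)]; exact dist_triangle _ _ _
      have : min (1/10 : ℝ) α * dist y₁ y₂ ≤ dist y₂ (x i) - dist y₁ (x i) := by
        have h1 : min (1/10 : ℝ) α * dist y₁ y₂ ≤ (1/10) * dist y₁ y₂ :=
          mul_le_mul_of_nonneg_right hmin1 hd0
        nlinarith
      rw [abs_sub_comm]
      exact this.trans (le_abs_self _)
end

section
/- Let X be a metric space free of 3-point SRA(α)-subspaces (0 < α < 1) with diam(X) < ∞. Let y₁, y₂ ∈ X with d(y₁,y₂) ≤ (3/10)·diam(X), and let x_j ∈ X satisfy d(x_j, y₁) ≥ (3/10)·diam(X). Then |d(x_j,y₁) − d(x_j,y₂)| ≥ α·d(y₁,y₂). -/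
/-!
Among the three points `xj, y₁, y₂` one lies `SRA(α)`-between the other two. It cannot be `xj`:
that would make `d(y₁, y₂) > d(xj, y₁)`, while both hypotheses compare these distances with
`3/10 · diam X` the other way. If it is `y₁` or `y₂`, the defining inequality of the betweenness
is the claimed bound.
-/

open Metric Set

section

variable {X : Type*} [MetricSpace X] {β : ℝ}

def SRABetween (β : ℝ) (x z y : X) : Prop :=
  max (dist x z + β * dist z y) (β * dist x z + dist z y) < dist x y

theorem SRABetween.symm {x z y : X} (h : SRABetween β x z y) : SRABetween β y z x := by
  unfold SRABetween at *
  rw [dist_comm y, dist_comm z x, dist_comm y x, max_comm, add_comm, add_comm (dist z y)]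
  exact h

theorem SRABetween.pairwise_ne {x z y : X} (hβ : 0 ≤ β) (h : SRABetween β x z y) :
    x ≠ z ∧ z ≠ y ∧ x ≠ y := by
  unfold SRABetween at h
  rw [max_lt_iff] at h
  refine ⟨?_, ?_, ?_⟩ <;> rintro rfl <;> simp only [dist_self] at h
  · linarith
  · linarith
  · linarith [mul_nonneg hβ (dist_nonneg (x := z) (y := x)), dist_nonneg (x := x) (y := z)]

theorem SRAFree.sraBetween_of_three {S : Set X} (hfree : SRAFree 3 β S) (hβ : 0 ≤ β)
    {a b c : X} (ha : a ∈ S) (hb : b ∈ S) (hc : c ∈ S) (hab : a ≠ b) (hac : a ≠ c)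
    (hbc : b ≠ c) :
    SRABetween β b a c ∨ SRABetween β a b c ∨ SRABetween β a c b := by
  classical
  have hcard : ({a, b, c} : Finset X).card = 3 := by
    rw [Finset.card_insert_of_notMem (by simp [hab, hac]),
      Finset.card_insert_of_notMem (by simp [hbc]), Finset.card_singleton]
  obtain ⟨x, hx, z, hz, y, hy, hxzy⟩ :=
    hfree {a, b, c} (by simp [insert_subset_iff, ha, hb, hc]) hcard
  have hbet : SRABetween β x z y := hxzy
  have hne := hbet.pairwise_ne hβ
  simp only [Finset.mem_insert, Finset.mem_singleton] at hx hz hy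
  rcases hx with rfl | rfl | rfl <;> rcases hz with rfl | rfl | rfl <;>
    rcases hy with rfl | rfl | rfl <;> simp_all [hbet.symm]

theorem SRAFree.mul_dist_le_abs_dist_sub {S : Set X} {α : ℝ} (hfree : SRAFree 3 α S)
    (hα₀ : 0 ≤ α) (hα₁ : α ≤ 1) {x y₁ y₂ : X} (hx : x ∈ S) (hy₁ : y₁ ∈ S) (hy₂ : y₂ ∈ S)
    (h : dist y₁ y₂ ≤ dist x y₁) :
    α * dist y₁ y₂ ≤ |dist x y₁ - dist x y₂| := by
  rcases eq_or_ne y₁ y₂ with rfl | h₁₂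
  · simp
  rcases eq_or_ne x y₁ with rfl | hx₁
  · exact absurd (dist_pos.2 h₁₂) (by simpa using h)
  rcases eq_or_ne x y₂ with rfl | hx₂
  · rw [dist_self, sub_zero, dist_comm, abs_of_nonneg dist_nonneg]
    exact mul_le_of_le_one_left dist_nonneg hα₁
  rcases hfree.sraBetween_of_three hα₀ hx hy₁ hy₂ hx₁ hx₂ h₁₂ with hbet | hbet | hbet <;>
    unfold SRABetween at hbet <;> rw [max_lt_iff] at hbet
  · linarith [dist_comm x y₁, mul_nonneg hα₀ (dist_nonneg (x := x) (y := y₂))]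
  · exact le_abs.2 (Or.inr (by linarith))
  · rw [dist_comm y₂ y₁] at hbet
    exact le_abs.2 (Or.inl (by linarith))

end

theorem stmt_7_general {X : Type*} [MetricSpace X] (α : ℝ) (hα : 0 < α) (hα1 : α < 1)
    (hfree : SRAFree 3 α (univ : Set X))
    (y₁ y₂ xj : X)
    (h1 : dist y₁ y₂ ≤ 3 / 10 * diam (univ : Set X))
    (h2 : dist xj y₁ ≥ 3 / 10 * diam (univ : Set X)) :
    α * dist y₁ y₂ ≤ |dist xj y₁ - dist xj y₂| :=
  hfree.mul_dist_le_abs_dist_sub hα.le hα1.le (mem_univ xj) (mem_univ y₁) (mem_univ y₂)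
    (h1.trans h2)

theorem stmt_7 {X : Type*} [MetricSpace X] (α : ℝ) (hα : 0 < α) (hα1 : α < 1)
    (hbdd : Bornology.IsBounded (univ : Set X))
    (hfree : SRAFree 3 α (univ : Set X))
    (y₁ y₂ xj : X)
    (h1 : dist y₁ y₂ ≤ 3 / 10 * diam (univ : Set X))
    (h2 : dist xj y₁ ≥ 3 / 10 * diam (univ : Set X)) :
    α * dist y₁ y₂ ≤ |dist xj y₁ - dist xj y₂| :=
  stmt_7_general α hα hα1 hfree y₁ y₂ xj h1 h2
end

section
/- Let X be a metric space with doubling constant λ, let Γ ≥ 1 and f : X → [0,∞) be Γ-Lipschitz. Suppose there exist n ∈ ℕ and D ≥ 1 such that for every x ∈ X the ball B_{f(x)}(x) embeds into ℝⁿ with bi-Lipschitz distortion less than D. Then for every ζ ≥ 1 there exist N = N(n,D,λ,ζ,Γ) and a map Φ : X → ℝᴺ such that: (1) Φ(x) = 0 whenever f(x) = 0; (2) the Lipschitz constant of Φ is bounded by a function of n, D, λ, ζ, Γ; (3) whenever d(x₁,x₂) ≤ ζ·max{f(x₁),f(x₂)}, one has ‖Φ(x₁)−Φ(x₂)‖ ≥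 (9Γ/(40ζ))·d(x₁,x₂). -/
open Metric Set

universe u v

section Helpers

noncomputable def cut (t : ℝ) : ℝ := min 1 (max 0 t)

lemma cut_nonneg (t : ℝ) : 0 ≤ cut t := le_min zero_le_one (le_max_left _ _)
lemma cut_le_one (t : ℝ) : cut t ≤ 1 := min_le_left _ _
lemma cut_eq_one {t : ℝ} (h : 1 ≤ t) : cut t = 1 := by
  rw [cut, max_eq_right (le_trans zero_le_one h), min_eq_left h]
lemma cut_eq_zero {t : ℝ} (h : t ≤ 0) : cut t = 0 := by
  rw [cut, max_eq_left h, min_eq_right zero_le_one]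
lemma cut_lip (a b : ℝ) : |cut a - cut b| ≤ |a - b| := by
  have h1 : |min 1 (max 0 a) - min 1 (max 0 b)| ≤ max |(1:ℝ) - 1| |max 0 a - max 0 b| :=
    abs_min_sub_min_le_max _ _ _ _
  have h2 : |max 0 a - max 0 b| ≤ max |(0:ℝ)-0| |a - b| := abs_max_sub_max_le_max _ _ _ _
  simp only [sub_self, abs_zero] at h1 h2
  calc |cut a - cut b| ≤ max 0 |max 0 a - max 0 b| := h1
    _ = |max 0 a - max 0 b| := max_eq_right (abs_nonneg _)
    _ ≤ max 0 |a - b| := h2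
    _ = |a - b| := max_eq_right (abs_nonneg _)

lemma exists_coloring {V : Type v} (K : ℕ) (nbr : V → V → Prop)
    (hsym : ∀ u v, nbr u v → nbr v u) (hirr : ∀ v, ¬ nbr v v)
    (hdeg : ∀ v : V, ∃ s : Finset V, (∀ u, nbr v u → u ∈ s) ∧ s.card < K) :
    ∃ c : V → Fin K, ∀ u v, nbr u v → c u ≠ c v := by
  classical
  have wo : IsWellOrder V WellOrderingRel := WellOrderingRel.isWellOrder
  have wf : WellFounded (WellOrderingRel (α := V)) := wo.wf
  have free : ∀ (v : V) (ih : ∀ u, WellOrderingRel u v → Fin K),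
      ∃ col : Fin K, ∀ u (h₁ : WellOrderingRel u v), nbr v u → ih u h₁ ≠ col := by
    intro v ih
    obtain ⟨s, hs, hcard⟩ := hdeg v
    set used : Finset (Fin K) :=
      s.attach.biUnion (fun u => if h : WellOrderingRel u.1 v ∧ nbr v u.1
        then {ih u.1 h.1} else ∅) with hused
    have hcardu : used.card < K := by
      calc used.card ≤ ∑ u ∈ s.attach, (if h : WellOrderingRel u.1 v ∧ nbr v u.1
            then ({ih u.1 h.1} : Finset (Fin K)) else ∅).card := Finset.card_biUnion_le
        _ ≤ ∑ _u ∈ s.attach, 1 := Finset.sum_le_sum (by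
            intro u _; split <;> simp)
        _ = s.card := by simp
        _ < K := hcard
    have hne : used ≠ Finset.univ := by
      intro h; rw [h, Finset.card_univ, Fintype.card_fin] at hcardu; exact lt_irrefl _ hcardu
    obtain ⟨col, hcol⟩ : ∃ col : Fin K, col ∉ used := by
      by_contra hcon
      push_neg at hcon
      exact hne (Finset.eq_univ_iff_forall.2 hcon)
    refine ⟨col, ?_⟩
    intro u h₁ h₂ heq
    apply hcol
    rw [hused, Finset.mem_biUnion]
    refine ⟨⟨u, hs u h₂⟩, Finset.mem_attach _ _, ?_⟩
    rw [dif_pos ⟨h₁, h₂⟩, Finset.mem_singleton]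
    exact heq.symm
  set c : V → Fin K := wf.fix (fun v ih => (free v ih).choose) with hc
  have key : ∀ v u, WellOrderingRel u v → nbr v u → c u ≠ c v := by
    intro v u h₁ h₂
    have hfix : c v = (free v (fun u _ => c u)).choose := by
      rw [hc]; exact wf.fix_eq _ v
    rw [hfix]
    exact (free v (fun u _ => c u)).choose_spec u h₁ h₂
  refine ⟨c, ?_⟩
  intro u v huv
  rcases (show WellOrderingRel u v ∨ u = v ∨ WellOrderingRel v u from
      if h1 : WellOrderingRel u v then Or.inl h1 else if h2 : WellOrderingRel v u then Or.inr (Or.inr h2)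
      else Or.inr (Or.inl (wo.trichotomous u v h1 h2))) with h | h | h
  · exact key v u h (hsym _ _ huv)
  · exact absurd (h ▸ huv) (hirr v)
  · exact fun heq => key u v h huv heq.symm

lemma cover_iter {X : Type u} [MetricSpace X] {lam : ℕ}
    (hdbl : ∀ (x : X) (R : ℝ), 0 < R → ∃ c : Fin lam → X, ball x R ⊆ ⋃ i, ball (c i) (R / 2))
    (k : ℕ) : ∀ (x : X) (R : ℝ), 0 < R →
      ∃ c : Fin (lam ^ k) → X, ball x R ⊆ ⋃ i, ball (c i) (R / 2 ^ k) := by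
  induction k with
  | zero =>
    intro x R hR
    refine ⟨fun _ => x, ?_⟩
    intro y hy
    exact mem_iUnion.2 ⟨⟨0, by norm_num⟩, by simpa using hy⟩
  | succ k ih =>
    intro x R hR
    obtain ⟨c₀, hc₀⟩ := hdbl x R hR
    choose c₁ hc₁ using fun i => ih (c₀ i) (R / 2) (by linarith)
    have e : Fin (lam ^ k * lam) ≃ Fin (lam ^ (k + 1)) := finCongr (by rw [pow_succ])
    refine ⟨fun p => (fun q : Fin lam × Fin (lam ^ k) => c₁ q.1 q.2)
      (Prod.swap (finProdFinEquiv.symm (e.symm p))), ?_⟩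
    intro y hy
    obtain ⟨i, hi⟩ := mem_iUnion.1 (hc₀ hy)
    obtain ⟨j, hj⟩ := mem_iUnion.1 (hc₁ i hi)
    refine mem_iUnion.2 ⟨e (finProdFinEquiv (j, i)), ?_⟩
    have hdd : R / 2 / 2 ^ k = R / 2 ^ (k + 1) := by
      rw [div_div, ← pow_succ']
    rw [hdd] at hj
    simpa using hj

lemma sep_card {X : Type u} [MetricSpace X] {lam : ℕ}
    (hdbl : ∀ (x : X) (R : ℝ), 0 < R → ∃ c : Fin lam → X, ball x R ⊆ ⋃ i, ball (c i) (R / 2))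
    (k : ℕ) (x : X) (R r : ℝ) (hR : 0 < R) (h2 : 2 * (R / 2 ^ k) ≤ r)
    (T : Finset X) (hTb : ∀ t ∈ T, t ∈ ball x R)
    (hsep : ∀ a ∈ T, ∀ b ∈ T, a ≠ b → r ≤ dist a b) : T.card ≤ lam ^ k := by
  classical
  rcases T.eq_empty_or_nonempty with h | ⟨t₀, ht₀⟩
  · simp [h]
  obtain ⟨c, hc⟩ := cover_iter hdbl k x R hR
  have hne : Nonempty (Fin (lam ^ k)) := by
    obtain ⟨i, _⟩ := mem_iUnion.1 (hc (hTb t₀ ht₀))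
    exact ⟨i⟩
  have hpick : ∀ t ∈ T, ∃ i, t ∈ ball (c i) (R / 2 ^ k) := by
    intro t ht; exact mem_iUnion.1 (hc (hTb t ht))
  set F : X → Fin (lam ^ k) := fun t =>
    if h : ∃ i, t ∈ ball (c i) (R / 2 ^ k) then h.choose else Classical.arbitrary _ with hF
  have hinj : Set.InjOn F ↑T := by
    intro a ha b hb hab
    by_contra hne'
    have hA := hpick a (by simpa using ha)
    have hB := hpick b (by simpa using hb)
    have h1 : a ∈ ball (c (F a)) (R / 2 ^ k) := by rw [hF]; simp only [dif_pos hA]; exact hA.choose_spec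
    have h2' : b ∈ ball (c (F b)) (R / 2 ^ k) := by rw [hF]; simp only [dif_pos hB]; exact hB.choose_spec
    rw [← hab] at h2'
    have : dist a b < 2 * (R / 2 ^ k) := by
      have := dist_triangle a (c (F a)) b
      rw [mem_ball] at h1 h2'
      rw [dist_comm b] at h2'
      linarith
    exact absurd (hsep a (by simpa using ha) b (by simpa using hb) hne') (by linarith)
  have hcard := Finset.card_le_card_of_injOn (s := T) (t := (Finset.univ : Finset (Fin (lam ^ k))))
    F (fun a _ => Finset.mem_univ _) hinj
  simpa using hcard

lemma exists_net {X : Type u} [MetricSpace X] (B : Set X) (r : ℝ) (hr : 0 < r) :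
    ∃ T : Set X, T ⊆ B ∧ (∀ a ∈ T, ∀ b ∈ T, a ≠ b → r ≤ dist a b) ∧
      (∀ b ∈ B, ∃ t ∈ T, dist b t < r) := by
  classical
  set S : Set (Set X) := {T | T ⊆ B ∧ ∀ a ∈ T, ∀ b ∈ T, a ≠ b → r ≤ dist a b} with hS
  have hchain : ∀ c ⊆ S, IsChain (· ⊆ ·) c → c.Nonempty → ∃ ub ∈ S, ∀ s ∈ c, s ⊆ ub := by
    intro c hcS hch hcne
    refine ⟨⋃₀ c, ⟨?_, ?_⟩, fun s hs => subset_sUnion_of_mem hs⟩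
    · exact sUnion_subset fun t ht => (hcS ht).1
    · intro a ha b hb hab
      obtain ⟨ta, hta, haa⟩ := ha
      obtain ⟨tb, htb, hbb⟩ := hb
      rcases hch.total hta htb with h | h
      · exact (hcS htb).2 a (h haa) b hbb hab
      · exact (hcS hta).2 a haa b (h hbb) hab
  have h0 : (∅ : Set X) ∈ S := ⟨empty_subset _, by simp⟩
  obtain ⟨T, -, hTS, hmax⟩ := zorn_subset_nonempty S hchain ∅ h0
  refine ⟨T, hTS.1, hTS.2, ?_⟩
  intro b hb
  by_contra hcon
  push_neg at hcon
  have hbT : b ∉ T := fun h => by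
    have := hcon b h; simp [dist_self] at this; linarith
  have hins : insert b T ∈ S := by
    constructor
    · exact insert_subset hb hTS.1
    · intro a ha a' ha' haa'
      rcases ha with rfl | ha
      · rcases ha' with rfl | ha'
        · exact absurd rfl haa'
        · exact hcon a' ha'
      · rcases ha' with rfl | ha'
        · rw [dist_comm]; exact hcon a ha
        · exact hTS.2 a ha a' ha' haa'
  have := hmax hins (subset_insert _ _)
  exact hbT (this (mem_insert _ _))

lemma eucl_coord_le {ι : Type*} [Fintype ι] (x y : EuclideanSpace ℝ ι) (i : ι) :
    dist (x i) (y i) ≤ dist x y := by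
  rw [EuclideanSpace.dist_eq]
  rw [show dist (x i) (y i) = Real.sqrt (dist (x i) (y i) ^ 2) from (Real.sqrt_sq dist_nonneg).symm]
  apply Real.sqrt_le_sqrt
  exact Finset.single_le_sum (f := fun j => dist (x j) (y j) ^ 2)
    (fun j _ => sq_nonneg _) (Finset.mem_univ i)

lemma eucl_dist_le {ι : Type*} [Fintype ι] (x y : EuclideanSpace ℝ ι) {B : ℝ} (hB : 0 ≤ B)
    (h : ∀ i, dist (x i) (y i) ≤ B) : dist x y ≤ Real.sqrt (Fintype.card ι) * B := by
  rw [EuclideanSpace.dist_eq]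
  have h1 : (∑ i, dist (x i) (y i) ^ 2) ≤ (Fintype.card ι : ℝ) * B ^ 2 := by
    calc ∑ i, dist (x i) (y i) ^ 2 ≤ ∑ _i : ι, B ^ 2 :=
          Finset.sum_le_sum (fun i _ => pow_le_pow_left₀ dist_nonneg (h i) 2)
      _ = (Fintype.card ι : ℝ) * B ^ 2 := by
          rw [Finset.sum_const, Finset.card_univ, nsmul_eq_mul]
  calc Real.sqrt (∑ i, dist (x i) (y i) ^ 2) ≤ Real.sqrt ((Fintype.card ι : ℝ) * B ^ 2) :=
        Real.sqrt_le_sqrt h1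
    _ = Real.sqrt (Fintype.card ι) * B := by
        rw [Real.sqrt_mul (by positivity), Real.sqrt_sq hB]

lemma eucl_block_le {ι : Type*} [Fintype ι] (x y : EuclideanSpace ℝ ι) {q : ℕ}
    (ι' : Fin q → ι) (hinj : Function.Injective ι') :
    Real.sqrt (∑ i, dist (x (ι' i)) (y (ι' i)) ^ 2) ≤ dist x y := by
  classical
  rw [EuclideanSpace.dist_eq]
  apply Real.sqrt_le_sqrt
  have him : ∑ j ∈ Finset.univ.image ι', dist (x j) (y j) ^ 2
      = ∑ i : Fin q, dist (x (ι' i)) (y (ι' i)) ^ 2 :=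
    Finset.sum_image (f := fun j => dist (x j) (y j) ^ 2) (by intro a _ b _ h; exact hinj h)
  calc ∑ i : Fin q, dist (x (ι' i)) (y (ι' i)) ^ 2
      = ∑ j ∈ Finset.univ.image ι', dist (x j) (y j) ^ 2 := him.symm
    _ ≤ ∑ j : ι, dist (x j) (y j) ^ 2 :=
        Finset.sum_le_sum_of_subset_of_nonneg (Finset.subset_univ _) (fun j _ _ => sq_nonneg _)

end Helpers

set_option maxHeartbeats 2000000 in
theorem stmt_11 (n lam : ℕ) (D Γ ζ : ℝ) (hD : 1 ≤ D) (hΓ : 1 ≤ Γ) (hζ : 1 ≤ ζ) :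
    ∃ (N : ℕ) (C : ℝ),
      ∀ (X : Type u) [MetricSpace X] (f : X → ℝ),
        (∀ (x : X) (R : ℝ), 0 < R →
          ∃ c : Fin lam → X, ball x R ⊆ ⋃ i, ball (c i) (R / 2)) →
        (∀ x : X, 0 ≤ f x) →
        (∀ a b : X, |f a - f b| ≤ Γ * dist a b) →
        (∀ x : X, ∃ (g : X → EuclideanSpace ℝ (Fin n)) (s D' : ℝ), 0 < s ∧ D' < D ∧
          ∀ a ∈ ball x (f x), ∀ b ∈ ball x (f x),
            s * dist a b ≤ dist (g a) (g b) ∧ dist (g a) (g b) ≤ D' * s * dist a b) →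
        ∃ Φ : X → EuclideanSpace ℝ (Fin N),
          (∀ x : X, f x = 0 → Φ x = 0) ∧
          (∀ a b : X, dist (Φ a) (Φ b) ≤ C * dist a b) ∧
          (∀ x₁ x₂ : X, dist x₁ x₂ ≤ ζ * max (f x₁) (f x₂) →
            9 * Γ / (40 * ζ) * dist x₁ x₂ ≤ dist (Φ x₁) (Φ x₂)) := by
  classical
  have hΓ0 : (0:ℝ) < Γ := lt_of_lt_of_le one_pos hΓ
  have hζ0 : (0:ℝ) < ζ := lt_of_lt_of_le one_pos hζ
  have hD0 : (0:ℝ) < D := lt_of_lt_of_le one_pos hD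
  rcases Nat.eq_zero_or_pos lam with hlam | hlam
  · -- degenerate: X must be empty
    refine ⟨0, 0, ?_⟩
    intro X _ f hdbl hf0 hlip hchart
    have hempty : ∀ x : X, False := by
      intro x
      obtain ⟨c, hc⟩ := hdbl x 1 one_pos
      obtain ⟨i, -⟩ := mem_iUnion.1 (hc (mem_ball_self one_pos))
      have := i.2
      omega
    exact ⟨fun _ => 0, fun x => (hempty x).elim, fun a _ => (hempty a).elim,
      fun a _ => (hempty a).elim⟩
  obtain ⟨k, hk⟩ : ∃ k : ℕ, 64 * Γ * (2 * ζ + 1) < 2 ^ k :=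
    pow_unbounded_of_one_lt _ one_lt_two
  refine ⟨lam ^ k * 8 * (n + 1), (lam ^ k * 8 * (n + 1) : ℕ) * (Γ * (64 * Γ + 6 * D)), ?_⟩
  intro X _ f hdbl hf0 hlip hchart
  set K := lam ^ k with hKdef
  have hK1 : 1 ≤ K := Nat.one_le_pow _ _ hlam
  set N := K * 8 * (n + 1) with hNdef
  -- basic constants
  set δ : ℝ := (32 * Γ)⁻¹ with hδdef
  have hδ0 : 0 < δ := by rw [hδdef]; positivity
  have hΓδ : Γ * δ = 1 / 32 := by rw [hδdef]; field_simp
  have hδle : δ ≤ 1 / 32 := by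
    rw [hδdef]
    calc (32 * Γ)⁻¹ ≤ (32:ℝ)⁻¹ := inv_anti₀ (by norm_num) (by linarith)
      _ = 1 / 32 := by norm_num
  set Rm : ℤ → ℝ := fun m => (2:ℝ) ^ m with hRmdef
  have hRm0 : ∀ m, 0 < Rm m := fun m => zpow_pos two_pos m
  -- layers and nets
  set Band : ℤ → Set X := fun m => {x | Rm m ≤ f x ∧ f x < 2 * Rm m} with hBanddef
  choose T hTsub hTsep hTcov using
    fun m : ℤ => exists_net (Band m) (δ * Rm m) (by positivity)
  -- charts
  choose g s Dp hcharts using hchart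
  have hs : ∀ x : X, 0 < s x := fun x => (hcharts x).1
  set gg : X → X → EuclideanSpace ℝ (Fin n) := fun j x => (s j)⁻¹ • (g j x - g j j) with hggdef
  have hggsub : ∀ j a b : X, gg j a - gg j b = (s j)⁻¹ • (g j a - g j b) := by
    intro j a b
    rw [hggdef]
    simp only [← smul_sub]
    congr 1
    abel
  have hggnorm : ∀ j a b : X, ‖gg j a - gg j b‖ = (s j)⁻¹ * dist (g j a) (g j b) := by
    intro j a b
    rw [hggsub, norm_smul, Real.norm_eq_abs, abs_of_pos (inv_pos.2 (hs j)), dist_eq_norm]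
  have hglow : ∀ (j : X), ∀ a ∈ ball j (f j), ∀ b ∈ ball j (f j),
      dist a b ≤ ‖gg j a - gg j b‖ := by
    intro j a ha b hb
    have h1 := ((hcharts j).2.2 a ha b hb).1
    rw [hggnorm]
    rw [show dist a b = (s j)⁻¹ * (s j * dist a b) from by rw [inv_mul_cancel_left₀ (hs j).ne']]
    exact mul_le_mul_of_nonneg_left h1 (inv_pos.2 (hs j)).le
  have hgup : ∀ (j : X), ∀ a ∈ ball j (f j), ∀ b ∈ ball j (f j),
      ‖gg j a - gg j b‖ ≤ D * dist a b := by
    intro j a ha b hb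
    have h1 := ((hcharts j).2.2 a ha b hb).2
    have h2 : Dp j < D := (hcharts j).2.1
    rw [hggnorm]
    calc (s j)⁻¹ * dist (g j a) (g j b) ≤ (s j)⁻¹ * (Dp j * s j * dist a b) :=
          mul_le_mul_of_nonneg_left h1 (inv_pos.2 (hs j)).le
      _ = Dp j * dist a b := by
          rw [show (s j)⁻¹ * (Dp j * s j * dist a b)
            = Dp j * dist a b * (s j * (s j)⁻¹) from by ring,
            mul_inv_cancel₀ (hs j).ne', mul_one]
      _ ≤ D * dist a b := mul_le_mul_of_nonneg_right h2.le dist_nonneg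
  -- coloring of each layer's net
  have hdeg : ∀ (m : ℤ) (v : ↥(T m)), ∃ fs : Finset ↥(T m),
      (∀ u : ↥(T m), ((u ≠ v ∧ dist (u:X) (v:X) < (2*ζ+1) * Rm m) → u ∈ fs)) ∧ fs.card < K := by
    intro m v
    set W : Set ↥(T m) := {u | dist (v:X) (u:X) < (2*ζ+1) * Rm m} with hW
    have hbound : ∀ F : Finset ↥(T m), ↑F ⊆ W → F.card ≤ K := by
      intro F hF
      have h2k : (0:ℝ) < 2 ^ k := pow_pos two_pos k
      have key : 2 * (2*ζ+1) ≤ δ * 2 ^ k := by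
        have h64 : δ * (64 * Γ * (2*ζ+1)) = 2 * (2*ζ+1) := by
          have harr : δ * (64 * Γ * (2*ζ+1)) = 64 * (Γ * δ) * (2*ζ+1) := by ring
          rw [harr, hΓδ]; ring
        nlinarith [mul_lt_mul_of_pos_left hk hδ0]
      have hcard : (F.image (Subtype.val : ↥(T m) → X)).card ≤ lam ^ k := by
        apply sep_card hdbl k (v:X) ((2*ζ+1) * Rm m) (δ * Rm m)
          (by positivity)
        · rw [show 2 * ((2*ζ+1) * Rm m / 2 ^ k) = (2*(2*ζ+1)) * Rm m / 2 ^ k from by ring,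
            div_le_iff₀ h2k]
          calc (2*(2*ζ+1)) * Rm m ≤ (δ * 2^k) * Rm m :=
                mul_le_mul_of_nonneg_right key (hRm0 m).le
            _ = δ * Rm m * 2 ^ k := by ring
        · intro t ht
          obtain ⟨u, hu, rfl⟩ := Finset.mem_image.1 ht
          have : u ∈ W := hF hu
          rw [mem_ball, dist_comm]
          exact this
        · intro a ha b hb hab
          obtain ⟨ua, hua, rfl⟩ := Finset.mem_image.1 ha
          obtain ⟨ub, hub, rfl⟩ := Finset.mem_image.1 hb
          exact hTsep m _ ua.2 _ ub.2 hab
      have : F.card = (F.image (Subtype.val : ↥(T m) → X)).card :=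
        (Finset.card_image_of_injective F Subtype.val_injective).symm
      rw [this]
      exact hcard
    have hWfin : W.Finite := by
      by_contra hinf
      obtain ⟨F, hFW, hFcard⟩ := Set.Infinite.exists_subset_card_eq hinf (K+1)
      have := hbound F hFW
      omega
    have hvW : v ∈ W := by
      rw [hW]
      simp only [Set.mem_setOf_eq, dist_self]
      positivity
    refine ⟨(hWfin.toFinset).erase v, ?_, ?_⟩
    · intro u hu
      rw [Finset.mem_erase]
      refine ⟨hu.1, ?_⟩
      rw [Set.Finite.mem_toFinset]
      rw [hW]; simp only [Set.mem_setOf_eq]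
      rw [dist_comm]
      exact hu.2
    · have h1 : 1 ≤ hWfin.toFinset.card := by
        rw [Nat.one_le_iff_ne_zero, ← Nat.pos_iff_ne_zero, Finset.card_pos]
        exact ⟨v, (Set.Finite.mem_toFinset _).2 hvW⟩
      have h2 : hWfin.toFinset.card ≤ K := hbound _ (by rw [Set.Finite.coe_toFinset])
      rw [Finset.card_erase_of_mem ((Set.Finite.mem_toFinset _).2 hvW)]
      omega
  have hcoloring : ∀ m : ℤ, ∃ c : ↥(T m) → Fin K, ∀ u v : ↥(T m),
      (u ≠ v ∧ dist (u:X) (v:X) < (2*ζ+1) * Rm m) → c u ≠ c v := by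
    intro m
    apply exists_coloring (V := ↥(T m)) K (fun u v => u ≠ v ∧ dist (u:X) (v:X) < (2*ζ+1) * Rm m)
    · intro u v h; exact ⟨h.1.symm, by rw [dist_comm]; exact h.2⟩
    · intro v h; exact h.1 rfl
    · intro v
      obtain ⟨fs, hfs, hcard⟩ := hdeg m v
      exact ⟨fs, fun u h => hfs u ⟨h.1.symm, by rw [dist_comm]; exact h.2⟩, hcard⟩
  choose col hcol using hcoloring
  -- same color distinct ⇒ far apart
  have hcol' : ∀ (m : ℤ) (u v : ↥(T m)), u ≠ v → col m u = col m v →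
      (2*ζ+1) * Rm m ≤ dist (u:X) (v:X) := by
    intro m u v hne heq
    by_contra hlt
    push_neg at hlt
    exact hcol m u v ⟨hne, hlt⟩ heq
  -- bump functions
  set bump : ℤ → X → X → ℝ :=
    fun m j x => Rm m * cut ((2*δ*Rm m - dist x j)/(δ*Rm m)) with hbumpdef
  set th : ℤ → X → X → ℝ :=
    fun m j x => cut ((8*δ*Rm m - dist x j)/(4*δ*Rm m)) with hthdef
  have hδRm : ∀ m : ℤ, 0 < δ * Rm m := fun m => by positivity
  have bump_nonneg : ∀ m j x, 0 ≤ bump m j x := by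
    intro m j x; simp only [hbumpdef]
    exact mul_nonneg (hRm0 m).le (cut_nonneg _)
  have bump_le : ∀ m j x, bump m j x ≤ Rm m := by
    intro m j x; simp only [hbumpdef]
    calc Rm m * cut _ ≤ Rm m * 1 := mul_le_mul_of_nonneg_left (cut_le_one _) (hRm0 m).le
      _ = Rm m := mul_one _
  have bump_plateau : ∀ m j x, dist x j ≤ δ * Rm m → bump m j x = Rm m := by
    intro m j x h; simp only [hbumpdef]
    rw [cut_eq_one, mul_one]
    rw [le_div_iff₀ (hδRm m), one_mul]
    linarith
  have bump_zero : ∀ m j x, 2*δ*Rm m ≤ dist x j → bump m j x = 0 := by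
    intro m j x h; simp only [hbumpdef]
    rw [cut_eq_zero, mul_zero]
    exact div_nonpos_of_nonpos_of_nonneg (by linarith) (hδRm m).le
  have bump_ne : ∀ m j x, bump m j x ≠ 0 → dist x j < 2*δ*Rm m := by
    intro m j x h
    by_contra hc
    push_neg at hc
    exact h (bump_zero m j x hc)
  have hδinv : δ⁻¹ = 32*Γ := by rw [hδdef, inv_inv]
  have bump_lip : ∀ m j x y, |bump m j x - bump m j y| ≤ 32*Γ*dist x y := by
    intro m j x y
    simp only [hbumpdef]
    have e1 : Rm m * cut ((2*δ*Rm m - dist x j)/(δ*Rm m))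
        - Rm m * cut ((2*δ*Rm m - dist y j)/(δ*Rm m))
        = Rm m * (cut ((2*δ*Rm m - dist x j)/(δ*Rm m))
          - cut ((2*δ*Rm m - dist y j)/(δ*Rm m))) := by ring
    rw [e1, abs_mul, abs_of_pos (hRm0 m)]
    have e2 : (2*δ*Rm m - dist x j)/(δ*Rm m) - (2*δ*Rm m - dist y j)/(δ*Rm m)
        = (dist y j - dist x j)/(δ*Rm m) := by ring
    calc Rm m * |cut ((2*δ*Rm m - dist x j)/(δ*Rm m))
          - cut ((2*δ*Rm m - dist y j)/(δ*Rm m))|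
        ≤ Rm m * |(dist y j - dist x j)/(δ*Rm m)| := by
          rw [← e2]
          exact mul_le_mul_of_nonneg_left (cut_lip _ _) (hRm0 m).le
      _ = Rm m * (|dist y j - dist x j| / (δ*Rm m)) := by
          rw [abs_div, abs_of_pos (hδRm m)]
      _ ≤ Rm m * (dist x y / (δ*Rm m)) := by
          gcongr
          rw [abs_sub_comm]
          exact abs_dist_sub_le x y j
      _ = 32*Γ*dist x y := by
          rw [show Rm m * (dist x y / (δ*Rm m)) = dist x y * δ⁻¹ * (Rm m * (Rm m)⁻¹) from by
            rw [div_eq_mul_inv, mul_inv]; ring]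
          rw [mul_inv_cancel₀ (hRm0 m).ne', mul_one, hδinv]
          ring
  have h4δRm : ∀ m : ℤ, 0 < 4 * (δ * Rm m) := fun m => by positivity
  have th_nonneg : ∀ m j x, 0 ≤ th m j x := by
    intro m j x; simp only [hthdef]; exact cut_nonneg _
  have th_le_one : ∀ m j x, th m j x ≤ 1 := by
    intro m j x; simp only [hthdef]; exact cut_le_one _
  have th_one : ∀ m j x, dist x j ≤ 4*δ*Rm m → th m j x = 1 := by
    intro m j x h; simp only [hthdef]
    apply cut_eq_one
    rw [le_div_iff₀ (by positivity), one_mul]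
    linarith
  have th_zero : ∀ m j x, 8*δ*Rm m ≤ dist x j → th m j x = 0 := by
    intro m j x h; simp only [hthdef]
    apply cut_eq_zero
    exact div_nonpos_of_nonpos_of_nonneg (by linarith) (by positivity)
  have th_ne : ∀ m j x, th m j x ≠ 0 → dist x j < 8*δ*Rm m := by
    intro m j x h
    by_contra hc
    push_neg at hc
    exact h (th_zero m j x hc)
  have th_lip : ∀ m j x y, |th m j x - th m j y| ≤ dist x y / (4*δ*Rm m) := by
    intro m j x y
    simp only [hthdef]
    have e2 : (8*δ*Rm m - dist x j)/(4*δ*Rm m) - (8*δ*Rm m - dist y j)/(4*δ*Rm m)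
        = (dist y j - dist x j)/(4*δ*Rm m) := by ring
    calc |cut ((8*δ*Rm m - dist x j)/(4*δ*Rm m)) - cut ((8*δ*Rm m - dist y j)/(4*δ*Rm m))|
        ≤ |(dist y j - dist x j)/(4*δ*Rm m)| := by rw [← e2]; exact cut_lip _ _
      _ = |dist y j - dist x j| / (4*δ*Rm m) := by
          rw [abs_div, abs_of_pos (show (0:ℝ) < 4*δ*Rm m from by positivity)]
      _ ≤ dist x y / (4*δ*Rm m) := by
          gcongr
          rw [abs_sub_comm]
          exact abs_dist_sub_le x y j
  -- window control of f on bump supports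
  have window : ∀ (m : ℤ) (j : X), j ∈ T m → ∀ x : X, dist x j < 8*δ*Rm m →
      (3/4)*Rm m ≤ f x ∧ f x ≤ 3*Rm m := by
    intro m j hj x hx
    obtain ⟨h1, h2⟩ := hTsub m hj
    have hl := abs_le.1 (hlip x j)
    have h3 : Γ * dist x j ≤ Γ * (8*δ*Rm m) := by
      apply mul_le_mul_of_nonneg_left hx.le hΓ0.le
    have h4 : Γ * (8*δ*Rm m) = (1/4)*Rm m := by
      rw [show Γ*(8*δ*Rm m) = 8*(Γ*δ)*Rm m from by ring, hΓδ]; ring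
    constructor <;> linarith [hl.1, hl.2]
  -- uniqueness of active bumps per coordinate
  have hRmle : ∀ a b : ℤ, Rm a ≤ 8 * Rm b → a ≤ b + 3 := by
    intro a b h
    have h8 : (8:ℝ) * Rm b = Rm (b+3) := by
      simp only [hRmdef]
      rw [zpow_add₀ (two_ne_zero : (2:ℝ) ≠ 0)]
      norm_num
      ring
    rw [h8] at h
    exact (zpow_le_zpow_iff_right₀ (one_lt_two : (1:ℝ) < 2)).1 h
  have uniq : ∀ (κ : Fin K) (m₁ m₂ : ℤ) (j₁ j₂ : X) (hj₁ : j₁ ∈ T m₁) (hj₂ : j₂ ∈ T m₂),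
      m₁ % 8 = m₂ % 8 → col m₁ ⟨j₁, hj₁⟩ = κ → col m₂ ⟨j₂, hj₂⟩ = κ →
      ∀ x : X, dist x j₁ < 8*δ*Rm m₁ → dist x j₂ < 8*δ*Rm m₂ → m₁ = m₂ ∧ j₁ = j₂ := by
    intro κ m₁ m₂ j₁ j₂ hj₁ hj₂ hmod hc₁ hc₂ x hx₁ hx₂
    obtain ⟨ha₁, hb₁⟩ := window m₁ j₁ hj₁ x hx₁
    obtain ⟨ha₂, hb₂⟩ := window m₂ j₂ hj₂ x hx₂
    have hm₁ : m₁ ≤ m₂ + 3 := hRmle _ _ (by linarith)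
    have hm₂ : m₂ ≤ m₁ + 3 := hRmle _ _ (by linarith)
    have hdvd : (8:ℤ) ∣ (m₂ - m₁) := Int.ModEq.dvd hmod
    have hmeq : m₁ = m₂ := by omega
    subst hmeq
    refine ⟨rfl, ?_⟩
    by_contra hne
    have hfar := hcol' m₁ ⟨j₁,hj₁⟩ ⟨j₂,hj₂⟩
      (fun h => hne (congrArg Subtype.val h)) (hc₁.trans hc₂.symm)
    simp only at hfar
    have htri : dist j₁ j₂ ≤ dist x j₁ + dist x j₂ := by
      rw [dist_comm x j₁] at *
      exact dist_triangle j₁ x j₂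
    have h16 : 16*δ ≤ 1/2 := by linarith
    nlinarith [hRm0 m₁]
  -- active-index sets
  set Act : Fin K → Fin 8 → X → Set (ℤ × X) := fun κ ρ x =>
    {p | p.1 % 8 = ((ρ:ℕ):ℤ) ∧ ∃ hj : p.2 ∈ T p.1, col p.1 ⟨p.2, hj⟩ = κ ∧ th p.1 p.2 x ≠ 0}
    with hActdef
  set ActB : Fin K → Fin 8 → X → Set (ℤ × X) := fun κ ρ x =>
    {p | p.1 % 8 = ((ρ:ℕ):ℤ) ∧ ∃ hj : p.2 ∈ T p.1, col p.1 ⟨p.2, hj⟩ = κ ∧ bump p.1 p.2 x ≠ 0}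
    with hActBdef
  have h2δ8δ : ∀ m : ℤ, 2*δ*Rm m ≤ 8*δ*Rm m := by
    intro m
    have := (hδRm m).le
    nlinarith
  have uniqAct : ∀ (κ : Fin K) (ρ : Fin 8) (x : X), ∀ p ∈ Act κ ρ x, ∀ q ∈ Act κ ρ x, p = q := by
    intro κ ρ x p hp q hq
    obtain ⟨hp1, hjp, hcp, hthp⟩ := hp
    obtain ⟨hq1, hjq, hcq, hthq⟩ := hq
    have h := uniq κ p.1 q.1 p.2 q.2 hjp hjq (hp1.trans hq1.symm) hcp hcq x
      (th_ne _ _ _ hthp) (th_ne _ _ _ hthq)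
    exact Prod.ext h.1 h.2
  have uniqActB : ∀ (κ : Fin K) (ρ : Fin 8) (x : X),
      ∀ p ∈ ActB κ ρ x, ∀ q ∈ ActB κ ρ x, p = q := by
    intro κ ρ x p hp q hq
    obtain ⟨hp1, hjp, hcp, hbp⟩ := hp
    obtain ⟨hq1, hjq, hcq, hbq⟩ := hq
    have h := uniq κ p.1 q.1 p.2 q.2 hjp hjq (hp1.trans hq1.symm) hcp hcq x
      (lt_of_lt_of_le (bump_ne _ _ _ hbp) (h2δ8δ _))
      (lt_of_lt_of_le (bump_ne _ _ _ hbq) (h2δ8δ _))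
    exact Prod.ext h.1 h.2
  -- the coordinate functions
  set ψ : Fin K → Fin 8 → X → ℝ := fun κ ρ x =>
    if h : (ActB κ ρ x).Nonempty then bump h.some.1 h.some.2 x else 0 with hψdef
  set Ξ : Fin K → Fin 8 → X → EuclideanSpace ℝ (Fin n) := fun κ ρ x =>
    if h : (Act κ ρ x).Nonempty then th h.some.1 h.some.2 x • gg h.some.2 x else 0 with hΞdef
  have ψ_nonneg : ∀ κ ρ x, 0 ≤ ψ κ ρ x := by
    intro κ ρ x
    simp only [hψdef]
    split
    · exact bump_nonneg _ _ _
    · exact le_refl 0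
  have ψ_zerof : ∀ κ ρ x, f x = 0 → ψ κ ρ x = 0 := by
    intro κ ρ x hfx
    simp only [hψdef]
    rw [dif_neg]
    rintro ⟨p, hp1, hjp, hcp, hbp⟩
    have hlt := lt_of_lt_of_le (bump_ne _ _ _ hbp) (h2δ8δ _)
    have hw := (window p.1 p.2 hjp x hlt).1
    rw [hfx] at hw
    linarith [hRm0 p.1]
  have Ξ_zerof : ∀ κ ρ x, f x = 0 → Ξ κ ρ x = 0 := by
    intro κ ρ x hfx
    simp only [hΞdef]
    rw [dif_neg]
    rintro ⟨p, hp1, hjp, hcp, hbp⟩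
    have hlt := th_ne _ _ _ hbp
    have hw := (window p.1 p.2 hjp x hlt).1
    rw [hfx] at hw
    linarith [hRm0 p.1]
  -- Lipschitz bound for ψ
  have ψ_lip : ∀ κ ρ x y, |ψ κ ρ x - ψ κ ρ y| ≤ 64*Γ*dist x y := by
    have aux : ∀ κ ρ x y, (ActB κ ρ x).Nonempty → |ψ κ ρ x - ψ κ ρ y| ≤ 64*Γ*dist x y := by
      intro κ ρ x y hx
      have hd32 : (0:ℝ) ≤ 32*Γ*dist x y := by positivity
      by_cases hy : (ActB κ ρ y).Nonempty
      · simp only [hψdef]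
        rw [dif_pos hx, dif_pos hy]
        by_cases hpq : hx.some = hy.some
        · rw [hpq]
          exact (bump_lip _ _ _ _).trans (by linarith)
        · have hbqx : bump hy.some.1 hy.some.2 x = 0 := by
            by_contra hne
            obtain ⟨h1, hj, hc, -⟩ := hy.some_mem
            exact hpq (uniqActB κ ρ x _ hx.some_mem _ ⟨h1, hj, hc, hne⟩)
          have hbpy : bump hx.some.1 hx.some.2 y = 0 := by
            by_contra hne
            obtain ⟨h1, hj, hc, -⟩ := hx.some_mem
            exact hpq (uniqActB κ ρ y _ ⟨h1, hj, hc, hne⟩ _ hy.some_mem)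
          calc |bump hx.some.1 hx.some.2 x - bump hy.some.1 hy.some.2 y|
              ≤ |bump hx.some.1 hx.some.2 x| + |bump hy.some.1 hy.some.2 y| := abs_sub _ _
            _ = |bump hx.some.1 hx.some.2 x - bump hx.some.1 hx.some.2 y|
                + |bump hy.some.1 hy.some.2 y - bump hy.some.1 hy.some.2 x| := by
                rw [hbpy, hbqx, sub_zero, sub_zero]
            _ ≤ 32*Γ*dist x y + 32*Γ*dist y x := by
                have l1 := bump_lip hx.some.1 hx.some.2 x y
                have l2 := bump_lip hy.some.1 hy.some.2 y x
                linarith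
            _ ≤ 64*Γ*dist x y := by rw [dist_comm y x]; linarith
      · simp only [hψdef]
        rw [dif_pos hx, dif_neg hy, sub_zero]
        have hbpy : bump hx.some.1 hx.some.2 y = 0 := by
          by_contra hne
          obtain ⟨h1, hj, hc, -⟩ := hx.some_mem
          exact hy ⟨hx.some, h1, hj, hc, hne⟩
        rw [show |bump hx.some.1 hx.some.2 x|
          = |bump hx.some.1 hx.some.2 x - bump hx.some.1 hx.some.2 y| from by rw [hbpy, sub_zero]]
        exact (bump_lip _ _ _ _).trans (by linarith)
    intro κ ρ x y
    by_cases hx : (ActB κ ρ x).Nonempty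
    · exact aux κ ρ x y hx
    · by_cases hy : (ActB κ ρ y).Nonempty
      · rw [abs_sub_comm, dist_comm]
        exact aux κ ρ y x hy
      · simp only [hψdef]
        rw [dif_neg hx, dif_neg hy, sub_zero, abs_zero]
        positivity
  -- chart-block Lipschitz bounds
  have h8δf : ∀ (m : ℤ) (j : X), j ∈ T m → 8*δ*Rm m < f j := by
    intro m j hj
    obtain ⟨h1, h2⟩ := hTsub m hj
    have : 8*δ ≤ 1/4 := by linarith
    nlinarith [hRm0 m]
  have hfj0 : ∀ (m : ℤ) (j : X), j ∈ T m → 0 < f j := by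
    intro m j hj
    obtain ⟨h1, h2⟩ := hTsub m hj
    linarith [hRm0 m]
  have hggj : ∀ j : X, gg j j = 0 := by
    intro j
    simp only [hggdef, sub_self, smul_zero]
  have hggbound : ∀ (m : ℤ) (j : X), j ∈ T m → ∀ x : X, dist x j < 8*δ*Rm m →
      ‖gg j x‖ ≤ D*(8*δ*Rm m) := by
    intro m j hj x hx
    have hxball : x ∈ ball j (f j) := mem_ball.2 (lt_trans hx (h8δf m j hj))
    have hjball : j ∈ ball j (f j) := mem_ball_self (hfj0 m j hj)
    calc ‖gg j x‖ = ‖gg j x - gg j j‖ := by rw [hggj, sub_zero]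
      _ ≤ D * dist x j := hgup j x hxball j hjball
      _ ≤ D * (8*δ*Rm m) := mul_le_mul_of_nonneg_left hx.le hD0.le
  have Θlip : ∀ (m : ℤ) (j : X), j ∈ T m → ∀ x y : X,
      ‖th m j x • gg j x - th m j y • gg j y‖ ≤ 3*D*dist x y := by
    have aux : ∀ (m : ℤ) (j : X), j ∈ T m → ∀ x y : X, th m j x ≠ 0 →
        ‖th m j x • gg j x - th m j y • gg j y‖ ≤ 3*D*dist x y := by
      intro m j hj x y hthx
      have hdx := th_ne m j x hthx
      have hgb := hggbound m j hj x hdx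
      have hxball : x ∈ ball j (f j) := mem_ball.2 (lt_trans hdx (h8δf m j hj))
      have hprod : dist x y/(4*δ*Rm m)*(D*(8*δ*Rm m)) = 2*D*dist x y := by
        rw [show dist x y/(4*δ*Rm m)*(D*(8*δ*Rm m))
          = (2*D*dist x y) * ((δ*Rm m) / (δ*Rm m)) from by ring,
          div_self (hδRm m).ne', mul_one]
      by_cases hyb : y ∈ ball j (f j)
      · have hsplit : th m j x • gg j x - th m j y • gg j y
            = th m j y • (gg j x - gg j y) + (th m j x - th m j y) • gg j x := by
          rw [smul_sub, sub_smul]; abel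
        calc ‖th m j x • gg j x - th m j y • gg j y‖
            ≤ ‖th m j y • (gg j x - gg j y)‖ + ‖(th m j x - th m j y) • gg j x‖ := by
              rw [hsplit]; exact norm_add_le _ _
          _ = th m j y * ‖gg j x - gg j y‖ + |th m j x - th m j y| * ‖gg j x‖ := by
              rw [norm_smul, norm_smul, Real.norm_eq_abs, Real.norm_eq_abs,
                abs_of_nonneg (th_nonneg m j y)]
          _ ≤ 1 * (D * dist x y) + (dist x y/(4*δ*Rm m)) * (D*(8*δ*Rm m)) := by
              apply add_le_add
              · exact mul_le_mul (th_le_one m j y) (hgup j x hxball y hyb)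
                  (norm_nonneg _) zero_le_one
              · exact mul_le_mul (th_lip m j x y) hgb (norm_nonneg _) (by positivity)
          _ = 3*D*dist x y := by rw [hprod]; ring
      · have hthy : th m j y = 0 := by
          apply th_zero
          rw [mem_ball] at hyb
          push_neg at hyb
          linarith [h8δf m j hj]
        rw [hthy, zero_smul, sub_zero]
        calc ‖th m j x • gg j x‖ = |th m j x - th m j y| * ‖gg j x‖ := by
              rw [hthy, sub_zero, norm_smul, Real.norm_eq_abs]
          _ ≤ (dist x y/(4*δ*Rm m)) * (D*(8*δ*Rm m)) :=
              mul_le_mul (th_lip m j x y) hgb (norm_nonneg _) (by positivity)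
          _ = 2*D*dist x y := hprod
          _ ≤ 3*D*dist x y := by nlinarith [dist_nonneg (x := x) (y := y), hD0.le]
    intro m j hj x y
    by_cases hx : th m j x = 0
    · by_cases hy : th m j y = 0
      · rw [hx, hy, zero_smul, zero_smul, sub_zero, norm_zero]
        positivity
      · rw [norm_sub_rev, dist_comm]
        exact aux m j hj y x hy
    · exact aux m j hj x y hx
  -- Ξ is Lipschitz
  have Ξ_lip : ∀ κ ρ x y, dist (Ξ κ ρ x) (Ξ κ ρ y) ≤ 6*D*dist x y := by
    have aux : ∀ κ ρ x y, (Act κ ρ x).Nonempty → dist (Ξ κ ρ x) (Ξ κ ρ y) ≤ 6*D*dist x y := by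
      intro κ ρ x y hx
      have hd3 : (0:ℝ) ≤ 3*D*dist x y := by positivity
      obtain ⟨hx1, hxj, hxc, hxth⟩ := hx.some_mem
      by_cases hy : (Act κ ρ y).Nonempty
      · obtain ⟨hy1, hyj, hyc, hyth⟩ := hy.some_mem
        simp only [hΞdef]
        rw [dif_pos hx, dif_pos hy, dist_eq_norm]
        by_cases hpq : hx.some = hy.some
        · rw [hpq]
          exact (Θlip hy.some.1 hy.some.2 hyj x y).trans (by linarith)
        · have hthqx : th hy.some.1 hy.some.2 x = 0 := by
            by_contra hne
            exact hpq (uniqAct κ ρ x _ hx.some_mem _ ⟨hy1, hyj, hyc, hne⟩)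
          have hthpy : th hx.some.1 hx.some.2 y = 0 := by
            by_contra hne
            exact hpq (uniqAct κ ρ y _ ⟨hx1, hxj, hxc, hne⟩ _ hy.some_mem)
          calc ‖th hx.some.1 hx.some.2 x • gg hx.some.2 x
                - th hy.some.1 hy.some.2 y • gg hy.some.2 y‖
              ≤ ‖th hx.some.1 hx.some.2 x • gg hx.some.2 x‖
                + ‖th hy.some.1 hy.some.2 y • gg hy.some.2 y‖ := norm_sub_le _ _
            _ = ‖th hx.some.1 hx.some.2 x • gg hx.some.2 x
                  - th hx.some.1 hx.some.2 y • gg hx.some.2 y‖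
                + ‖th hy.some.1 hy.some.2 y • gg hy.some.2 y
                  - th hy.some.1 hy.some.2 x • gg hy.some.2 x‖ := by
                rw [hthpy, hthqx, zero_smul, zero_smul, sub_zero, sub_zero]
            _ ≤ 3*D*dist x y + 3*D*dist y x :=
                add_le_add (Θlip hx.some.1 hx.some.2 hxj x y) (Θlip hy.some.1 hy.some.2 hyj y x)
            _ = 6*D*dist x y := by rw [dist_comm y x]; ring
      · have hthpy : th hx.some.1 hx.some.2 y = 0 := by
          by_contra hne
          exact hy ⟨hx.some, hx1, hxj, hxc, hne⟩
        simp only [hΞdef]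
        rw [dif_pos hx, dif_neg hy, dist_eq_norm, sub_zero]
        calc ‖th hx.some.1 hx.some.2 x • gg hx.some.2 x‖
            = ‖th hx.some.1 hx.some.2 x • gg hx.some.2 x
              - th hx.some.1 hx.some.2 y • gg hx.some.2 y‖ := by
              rw [hthpy, zero_smul, sub_zero]
          _ ≤ 3*D*dist x y := Θlip hx.some.1 hx.some.2 hxj x y
          _ ≤ 6*D*dist x y := by nlinarith [dist_nonneg (x := x) (y := y), hD0.le]
    intro κ ρ x y
    by_cases hx : (Act κ ρ x).Nonempty
    · exact aux κ ρ x y hx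
    · by_cases hy : (Act κ ρ y).Nonempty
      · rw [dist_comm x y, dist_comm]
        exact aux κ ρ y x hy
      · simp only [hΞdef]
        rw [dif_neg hx, dif_neg hy, dist_self]
        positivity
  -- assemble the map
  set e : ((Fin K × Fin 8) × Fin (n+1)) ≃ Fin N :=
    (Equiv.prodCongr finProdFinEquiv (Equiv.refl (Fin (n+1)))).trans finProdFinEquiv with hedef
  set F : X → (Fin K × Fin 8) → Fin (n+1) → ℝ := fun x p =>
    Fin.cons (Γ * ψ p.1 p.2 x) (fun i => Γ * Ξ p.1 p.2 x i) with hFdef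
  set Φ : X → EuclideanSpace ℝ (Fin N) := fun x => WithLp.toLp 2 (fun i => F x (e.symm i).1 (e.symm i).2) with hΦdef
  have hΦapp : ∀ (x : X) (q : (Fin K × Fin 8) × Fin (n+1)), Φ x (e q) = F x q.1 q.2 := by
    intro x q
    simp only [hΦdef, PiLp.toLp_apply]
    rw [Equiv.symm_apply_apply]
  have hcoord0 : ∀ (x : X) (κ : Fin K) (ρ : Fin 8), Φ x (e ((κ,ρ), 0)) = Γ * ψ κ ρ x := by
    intro x κ ρ
    rw [hΦapp]
    simp only [hFdef, Fin.cons_zero]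
  have hcoordS : ∀ (x : X) (κ : Fin K) (ρ : Fin 8) (i : Fin n),
      Φ x (e ((κ,ρ), i.succ)) = Γ * Ξ κ ρ x i := by
    intro x κ ρ i
    rw [hΦapp]
    simp only [hFdef, Fin.cons_succ]
  have hsingle : ∀ (x y : X) (q : (Fin K × Fin 8) × Fin (n+1)),
      dist (Φ x (e q)) (Φ y (e q)) ≤ dist (Φ x) (Φ y) :=
    fun x y q => eucl_coord_le (Φ x) (Φ y) (e q)
  have hblock : ∀ (κ : Fin K) (ρ : Fin 8) (x y : X),
      Γ * dist (Ξ κ ρ x) (Ξ κ ρ y) ≤ dist (Φ x) (Φ y) := by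
    intro κ ρ x y
    have hι : Function.Injective (fun i : Fin n => e ((κ,ρ), i.succ)) := by
      intro a b hab
      have h1 := e.injective hab
      have h2 := (Prod.ext_iff.1 h1).2
      simp only at h2
      exact Fin.succ_injective n h2
    have hb := eucl_block_le (Φ x) (Φ y) _ hι
    have hsum : ∀ i : Fin n, dist (Φ x (e ((κ,ρ), i.succ))) (Φ y (e ((κ,ρ), i.succ)))
        = Γ * dist (Ξ κ ρ x i) (Ξ κ ρ y i) := by
      intro i
      rw [hcoordS, hcoordS, Real.dist_eq, Real.dist_eq,
        show Γ * Ξ κ ρ x i - Γ * Ξ κ ρ y i = Γ * (Ξ κ ρ x i - Ξ κ ρ y i) from by ring,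
        abs_mul, abs_of_pos hΓ0]
    calc Γ * dist (Ξ κ ρ x) (Ξ κ ρ y)
        = Real.sqrt (∑ i : Fin n, (Γ * dist (Ξ κ ρ x i) (Ξ κ ρ y i))^2) := by
          rw [EuclideanSpace.dist_eq]
          have hss : ∑ i : Fin n, (Γ * dist (Ξ κ ρ x i) (Ξ κ ρ y i))^2
              = Γ^2 * ∑ i, dist (Ξ κ ρ x i) (Ξ κ ρ y i)^2 := by
            rw [Finset.mul_sum]
            apply Finset.sum_congr rfl
            intro i _
            ring
          rw [hss, Real.sqrt_mul (sq_nonneg Γ), Real.sqrt_sq hΓ0.le]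
      _ = Real.sqrt (∑ i : Fin n,
            dist (Φ x (e ((κ,ρ), i.succ))) (Φ y (e ((κ,ρ), i.succ)))^2) := by
          congr 1
          apply Finset.sum_congr rfl
          intro i _
          rw [hsum]
      _ ≤ dist (Φ x) (Φ y) := hb
  have hN1 : 1 ≤ N := by
    rw [hNdef]
    exact Nat.one_le_iff_ne_zero.2
      (Nat.mul_ne_zero (Nat.mul_ne_zero (by omega) (by norm_num)) (by omega))
  refine ⟨Φ, ?_, ?_, ?_⟩
  · -- vanishing on the zero set
    intro x hfx
    ext i
    have hFzero : ∀ q : (Fin K × Fin 8) × Fin (n+1), F x q.1 q.2 = 0 := by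
      rintro ⟨⟨κ, ρ⟩, i⟩
      induction i using Fin.cases with
      | zero => simp [hFdef, Fin.cons_zero, ψ_zerof κ ρ x hfx]
      | succ i => simp [hFdef, Fin.cons_succ, Ξ_zerof κ ρ x hfx]
    have h1 : Φ x i = F x (e.symm i).1 (e.symm i).2 := by simp only [hΦdef, PiLp.toLp_apply]
    rw [h1, hFzero]
    rfl
  · -- Lipschitz bound
    intro a b
    have hB : (0:ℝ) ≤ Γ*(64*Γ+6*D)*dist a b :=
      mul_nonneg (mul_nonneg hΓ0.le (by linarith)) dist_nonneg
    have hcl : ∀ i : Fin N, dist (Φ a i) (Φ b i) ≤ Γ*(64*Γ+6*D)*dist a b := by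
      intro i
      have hi : e (e.symm i) = i := Equiv.apply_symm_apply e i
      rcases hq : e.symm i with ⟨⟨κ, ρ⟩, j⟩
      have h1 : Φ a i = F a (κ, ρ) j := by simp only [hΦdef, PiLp.toLp_apply]; rw [hq]
      have h2 : Φ b i = F b (κ, ρ) j := by simp only [hΦdef, PiLp.toLp_apply]; rw [hq]
      rw [h1, h2]
      induction j using Fin.cases with
      | zero =>
        simp only [hFdef, Fin.cons_zero]
        rw [Real.dist_eq, show Γ * ψ κ ρ a - Γ * ψ κ ρ b = Γ * (ψ κ ρ a - ψ κ ρ b) from by ring,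
          abs_mul, abs_of_pos hΓ0]
        calc Γ * |ψ κ ρ a - ψ κ ρ b| ≤ Γ * (64*Γ*dist a b) :=
              mul_le_mul_of_nonneg_left (ψ_lip κ ρ a b) hΓ0.le
          _ ≤ Γ*(64*Γ+6*D)*dist a b := by nlinarith [dist_nonneg (x := a) (y := b)]
      | succ i' =>
        simp only [hFdef, Fin.cons_succ]
        rw [Real.dist_eq,
          show Γ * Ξ κ ρ a i' - Γ * Ξ κ ρ b i' = Γ * (Ξ κ ρ a i' - Ξ κ ρ b i') from by ring,
          abs_mul, abs_of_pos hΓ0]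
        have hc : |Ξ κ ρ a i' - Ξ κ ρ b i'| ≤ dist (Ξ κ ρ a) (Ξ κ ρ b) := by
          rw [← Real.dist_eq]
          exact eucl_coord_le _ _ i'
        calc Γ * |Ξ κ ρ a i' - Ξ κ ρ b i'| ≤ Γ * (6*D*dist a b) :=
              mul_le_mul_of_nonneg_left (hc.trans (Ξ_lip κ ρ a b)) hΓ0.le
          _ ≤ Γ*(64*Γ+6*D)*dist a b := by nlinarith [dist_nonneg (x := a) (y := b)]
    have hsqrtN : Real.sqrt (N:ℝ) ≤ (N:ℝ) := by
      have hN0 : (1:ℝ) ≤ (N:ℝ) := by exact_mod_cast hN1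
      have h1 : Real.sqrt (N:ℝ) ≤ Real.sqrt ((N:ℝ)^2) := Real.sqrt_le_sqrt (by nlinarith)
      rwa [Real.sqrt_sq (by linarith : (0:ℝ) ≤ (N:ℝ))] at h1
    calc dist (Φ a) (Φ b)
        ≤ Real.sqrt (Fintype.card (Fin N)) * (Γ*(64*Γ+6*D)*dist a b) :=
          eucl_dist_le (Φ a) (Φ b) hB hcl
      _ = Real.sqrt (N:ℝ) * (Γ*(64*Γ+6*D)*dist a b) := by rw [Fintype.card_fin]
      _ ≤ (N:ℝ) * (Γ*(64*Γ+6*D)*dist a b) := mul_le_mul_of_nonneg_right hsqrtN hB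
      _ = (N:ℝ) * (Γ*(64*Γ+6*D)) * dist a b := by ring
  · -- distortion lower bound
    -- lower bound
    have main : ∀ x₁ x₂ : X, f x₂ ≤ f x₁ → dist x₁ x₂ ≤ ζ * f x₁ →
        9 * Γ / (40 * ζ) * dist x₁ x₂ ≤ dist (Φ x₁) (Φ x₂) := by
      intro x₁ x₂ hf21 hζf
      rcases eq_or_lt_of_le (hf0 x₁) with hf1 | hf1
      · have hz : ζ * f x₁ = 0 := by rw [← hf1, mul_zero]
        have hd0 : dist x₁ x₂ = 0 := le_antisymm (by rw [← hz]; exact hζf) dist_nonneg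
        rw [hd0, mul_zero]
        exact dist_nonneg
      · obtain ⟨m, hm1, hm2⟩ : ∃ m : ℤ, Rm m ≤ f x₁ ∧ f x₁ < 2 * Rm m := by
          refine ⟨Int.log 2 (f x₁), ?_, ?_⟩
          · simp only [hRmdef]
            have := Int.zpow_log_le_self (b := 2) (by norm_num) hf1
            simpa using this
          · simp only [hRmdef]
            have h1 := Int.lt_zpow_succ_log_self (b := 2) (by norm_num) (f x₁)
            have h2 : ((2:ℕ):ℝ) ^ (Int.log 2 (f x₁) + 1) = 2 * (2:ℝ) ^ (Int.log 2 (f x₁)) := by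
              push_cast
              rw [zpow_add_one₀ (two_ne_zero : (2:ℝ) ≠ 0)]
              ring
            rw [h2] at h1
            exact h1
        obtain ⟨j, hjT, hjd⟩ := hTcov m x₁ ⟨hm1, hm2⟩
        have hρlt : ((m % 8).toNat) < 8 := by
          have h1 : 0 ≤ m % 8 := Int.emod_nonneg m (by norm_num)
          have h2 : m % 8 < 8 := Int.emod_lt_of_pos m (by norm_num)
          omega
        set ρ : Fin 8 := ⟨(m % 8).toNat, hρlt⟩ with hρdef
        have hρm : m % 8 = ((ρ:ℕ):ℤ) := by
          simp only [hρdef]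
          rw [Int.toNat_of_nonneg (Int.emod_nonneg m (by norm_num))]
        set κ : Fin K := col m ⟨j, hjT⟩ with hκdef
        have hζf2 : dist x₁ x₂ < 2*ζ*Rm m := by nlinarith
        by_cases hcase : dist x₁ x₂ ≤ 3*δ*Rm m
        · -- small scale: use the chart coordinate block
          have hth1 : th m j x₁ = 1 := th_one m j x₁ (by linarith [(hδRm m).le])
          have hd2j : dist x₂ j ≤ 4*δ*Rm m := by
            have htr := dist_triangle x₂ x₁ j
            rw [dist_comm x₂ x₁] at htr
            linarith
          have hth2 : th m j x₂ = 1 := th_one m j x₂ hd2j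
          have hmem1 : (m, j) ∈ Act κ ρ x₁ :=
            ⟨hρm, hjT, hκdef.symm, by rw [hth1]; exact one_ne_zero⟩
          have hmem2 : (m, j) ∈ Act κ ρ x₂ :=
            ⟨hρm, hjT, hκdef.symm, by rw [hth2]; exact one_ne_zero⟩
          have hne1 : (Act κ ρ x₁).Nonempty := ⟨(m,j), hmem1⟩
          have hne2 : (Act κ ρ x₂).Nonempty := ⟨(m,j), hmem2⟩
          have heq1 : Ξ κ ρ x₁ = th m j x₁ • gg j x₁ := by
            simp only [hΞdef]
            rw [dif_pos hne1]
            have hsm : hne1.some = (m, j) := uniqAct κ ρ x₁ _ hne1.some_mem _ hmem1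
            rw [hsm]
          have heq2 : Ξ κ ρ x₂ = th m j x₂ • gg j x₂ := by
            simp only [hΞdef]
            rw [dif_pos hne2]
            have hsm : hne2.some = (m, j) := uniqAct κ ρ x₂ _ hne2.some_mem _ hmem2
            rw [hsm]
          have hball1 : x₁ ∈ ball j (f j) := by
            rw [mem_ball]
            have := h8δf m j hjT
            have := hδRm m
            linarith
          have hball2 : x₂ ∈ ball j (f j) := by
            rw [mem_ball]
            have := h8δf m j hjT
            have := hδRm m
            linarith
          have hlow : dist x₁ x₂ ≤ ‖gg j x₁ - gg j x₂‖ := hglow j x₁ hball1 x₂ hball2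
          have hXi : dist (Ξ κ ρ x₁) (Ξ κ ρ x₂) = ‖gg j x₁ - gg j x₂‖ := by
            rw [heq1, heq2, hth1, hth2, one_smul, one_smul, dist_eq_norm]
          calc 9*Γ/(40*ζ)*dist x₁ x₂ ≤ Γ*dist x₁ x₂ := by
                have h940 : 9*Γ/(40*ζ) ≤ Γ := by
                  rw [div_le_iff₀ (by positivity)]
                  nlinarith
                exact mul_le_mul_of_nonneg_right h940 dist_nonneg
            _ ≤ Γ * dist (Ξ κ ρ x₁) (Ξ κ ρ x₂) := by
                rw [hXi]
                exact mul_le_mul_of_nonneg_left hlow hΓ0.le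
            _ ≤ dist (Φ x₁) (Φ x₂) := hblock κ ρ x₁ x₂
        · -- medium scale: use the scalar coordinate
          push_neg at hcase
          have hbmem : (m, j) ∈ ActB κ ρ x₁ := by
            refine ⟨hρm, hjT, hκdef.symm, ?_⟩
            rw [bump_plateau m j x₁ hjd.le]
            exact (hRm0 m).ne'
          have hne1 : (ActB κ ρ x₁).Nonempty := ⟨(m,j), hbmem⟩
          have hψ1 : ψ κ ρ x₁ = Rm m := by
            simp only [hψdef]
            rw [dif_pos hne1]
            have hsm : hne1.some = (m, j) := uniqActB κ ρ x₁ _ hne1.some_mem _ hbmem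
            rw [hsm]
            exact bump_plateau m j x₁ hjd.le
          have hb_all : ∀ p ∈ ActB κ ρ x₂, bump p.1 p.2 x₂ ≤ Rm m / 256 := by
            rintro ⟨m', j'⟩ ⟨hq1, hjq, hcq, hbq⟩
            have hdq : dist x₂ j' < 2*δ*Rm m' := bump_ne _ _ _ hbq
            by_cases hmeq : m' = m
            · subst hmeq
              exfalso
              by_cases hjj : j' = j
              · subst hjj
                have htr := dist_triangle x₁ j' x₂
                rw [dist_comm j' x₂] at htr
                linarith
              · have hfar := hcol' m' ⟨j', hjq⟩ ⟨j, hjT⟩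
                  (fun h => hjj (congrArg Subtype.val h)) (hcq.trans hκdef)
                simp only at hfar
                have htr1 : dist j' j ≤ dist j' x₂ + dist x₂ j := dist_triangle _ _ _
                have htr2 : dist x₂ j ≤ dist x₂ x₁ + dist x₁ j := dist_triangle _ _ _
                rw [dist_comm j' x₂] at htr1
                rw [dist_comm x₂ x₁] at htr2
                nlinarith [hRm0 m']
            · have hw := (window m' j' hjq x₂ (lt_of_lt_of_le hdq (h2δ8δ m'))).1
              have hRlt : Rm m' < Rm (m+2) := by
                have h4 : Rm (m+2) = 4*Rm m := by
                  simp only [hRmdef]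
                  rw [zpow_add₀ (two_ne_zero : (2:ℝ) ≠ 0)]
                  norm_num
                  ring
                rw [h4]
                nlinarith
              have hm'lt : m' < m + 2 := by
                simp only [hRmdef] at hRlt
                exact (zpow_lt_zpow_iff_right₀ (one_lt_two : (1:ℝ) < 2)).1 hRlt
              have hdvd : (8:ℤ) ∣ (m - m') := Int.ModEq.dvd (hq1.trans hρm.symm)
              have hm'8 : m' ≤ m - 8 := by omega
              calc bump m' j' x₂ ≤ Rm m' := bump_le _ _ _
                _ ≤ Rm (m - 8) := by
                    simp only [hRmdef]
                    exact (zpow_le_zpow_iff_right₀ (one_lt_two : (1:ℝ) < 2)).2 hm'8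
                _ = Rm m / 256 := by
                    simp only [hRmdef]
                    rw [zpow_sub₀ (two_ne_zero : (2:ℝ) ≠ 0)]
                    norm_num
          have hψ2 : ψ κ ρ x₂ ≤ Rm m / 256 := by
            simp only [hψdef]
            by_cases hne2 : (ActB κ ρ x₂).Nonempty
            · rw [dif_pos hne2]
              exact hb_all _ hne2.some_mem
            · rw [dif_neg hne2]
              linarith [hRm0 m]
          have hcd := hsingle x₁ x₂ ((κ,ρ), 0)
          rw [hcoord0, hcoord0] at hcd
          have habs : Γ*(Rm m - Rm m/256) ≤ dist (Γ*ψ κ ρ x₁) (Γ*ψ κ ρ x₂) := by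
            rw [Real.dist_eq]
            have hmul : Γ * ψ κ ρ x₂ ≤ Γ * (Rm m / 256) :=
              mul_le_mul_of_nonneg_left hψ2 hΓ0.le
            have h1 : Γ*(Rm m - Rm m/256) ≤ Γ*ψ κ ρ x₁ - Γ*ψ κ ρ x₂ := by
              rw [hψ1]
              linarith
            exact h1.trans (le_abs_self _)
          have h2 : 9*Γ/(40*ζ)*(2*ζ*Rm m) = (9/20)*Γ*Rm m := by
            field_simp
            ring
          have h1 : 9*Γ/(40*ζ)*dist x₁ x₂ ≤ 9*Γ/(40*ζ)*(2*ζ*Rm m) :=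
            mul_le_mul_of_nonneg_left hζf2.le (by positivity)
          have h3 : (9/20)*Γ*Rm m ≤ Γ*(Rm m - Rm m/256) := by
            nlinarith [mul_pos hΓ0 (hRm0 m)]
          linarith
    intro x₁ x₂ hmax
    rcases le_total (f x₂) (f x₁) with h | h
    · exact main x₁ x₂ h (by rwa [max_eq_left h] at hmax)
    · rw [dist_comm x₁ x₂, dist_comm (Φ x₁) (Φ x₂)]
      refine main x₂ x₁ h ?_
      rw [dist_comm]
      rwa [max_eq_right h] at hmax
end

section
/- Let X be a separable metric space and fix x ∈ X, N ∈ ℕ, D ≥ 1. Suppose that for every m ∈ ℕ there exists an embedding φ_m : B_m(x) → ℝᴺ with bi-Lipschitz distortion at most D and φ_m(x) = 0. Then there exists an embedding φ : X → ℝᴺ with distortion at most D. -/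
open Metric Set Filter Topology

theorem stmt_15 {X : Type*} [MetricSpace X] [TopologicalSpace.SeparableSpace X]
    (x : X) (N : ℕ) (D : ℝ) (hD : 1 ≤ D)
    (h : ∀ m : ℕ, ∃ (φ : X → EuclideanSpace ℝ (Fin N)) (s : ℝ), 0 < s ∧ φ x = 0 ∧
      ∀ a ∈ ball x (m : ℝ), ∀ b ∈ ball x (m : ℝ),
        s * dist a b ≤ dist (φ a) (φ b) ∧ dist (φ a) (φ b) ≤ D * s * dist a b) :
    ∃ (φ : X → EuclideanSpace ℝ (Fin N)) (s : ℝ), 0 < s ∧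
      ∀ a b : X, s * dist a b ≤ dist (φ a) (φ b) ∧ dist (φ a) (φ b) ≤ D * s * dist a b := by
  classical
  choose φ s hs hφx hφ using h
  set ψ : ℕ → X → EuclideanSpace ℝ (Fin N) := fun m a => if a ∈ ball x (m : ℝ) then (s m)⁻¹ • (φ m a) else 0 with hψdef
  -- normalized distortion bounds on each ball
  have key : ∀ m : ℕ, ∀ a ∈ ball x (m : ℝ), ∀ b ∈ ball x (m : ℝ),
      dist a b ≤ dist (ψ m a) (ψ m b) ∧ dist (ψ m a) (ψ m b) ≤ D * dist a b := by
    intro m a ha b hb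
    obtain ⟨h1, h2⟩ := hφ m a ha b hb
    have hsm := hs m
    have hinv : (0:ℝ) ≤ (s m)⁻¹ := le_of_lt (inv_pos.mpr hsm)
    simp only [hψdef, if_pos ha, if_pos hb]
    rw [dist_smul₀, norm_inv, Real.norm_eq_abs, abs_of_pos hsm]
    constructor
    · calc dist a b = (s m)⁻¹ * (s m * dist a b) := by field_simp
        _ ≤ (s m)⁻¹ * dist (φ m a) (φ m b) := mul_le_mul_of_nonneg_left h1 hinv
    · calc (s m)⁻¹ * dist (φ m a) (φ m b) ≤ (s m)⁻¹ * (D * s m * dist a b) :=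
          mul_le_mul_of_nonneg_left h2 hinv
        _ = D * dist a b := by field_simp
  -- the normalized maps live in a compact set
  have hmemx : ∀ m : ℕ, ∀ a ∈ ball x (m : ℝ), x ∈ ball x (m : ℝ) := by
    intro m a ha
    have : (0:ℝ) ≤ dist a x := dist_nonneg
    simp only [mem_ball, dist_self] at ha ⊢
    linarith
  have hmem : ∀ m : ℕ, ∀ a : X, ψ m a ∈ closedBall (0 : EuclideanSpace ℝ (Fin N)) (D * dist a x) := by
    intro m a
    by_cases ha : a ∈ ball x (m : ℝ)
    · have hx := hmemx m a ha
      have hψx : ψ m x = 0 := by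
        simp only [hψdef, if_pos hx, hφx m, smul_zero]
      have := (key m a ha x hx).2
      rw [mem_closedBall, ← hψx]
      exact this
    · simp only [hψdef, if_neg ha]
      rw [mem_closedBall, dist_self]
      positivity
  set S : Set (X → EuclideanSpace ℝ (Fin N)) := Set.pi univ (fun a => closedBall (0 : EuclideanSpace ℝ (Fin N)) (D * dist a x)) with hSdef
  have hScomp : IsCompact S := isCompact_univ_pi (fun a => isCompact_closedBall _ _)
  have hmapS : Filter.map ψ atTop ≤ 𝓟 S := by
    rw [le_principal_iff, mem_map]
    filter_upwards with m
    intro a _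
    exact hmem m a
  obtain ⟨Φ, _, hcl⟩ := hScomp.exists_clusterPt hmapS
  refine ⟨Φ, 1, one_pos, ?_⟩
  intro a b
  set C : Set (X → EuclideanSpace ℝ (Fin N)) :=
    {f | dist a b ≤ dist (f a) (f b) ∧ dist (f a) (f b) ≤ D * dist a b} with hCdef
  have hCclosed : IsClosed C := by
    have hc : Continuous fun f : X → EuclideanSpace ℝ (Fin N) => dist (f a) (f b) :=
      Continuous.dist (continuous_apply a) (continuous_apply b)
    exact (isClosed_le continuous_const hc).inter (isClosed_le hc continuous_const)
  have hCev : C ∈ Filter.map ψ atTop := by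
    obtain ⟨m0, hm0⟩ := exists_nat_gt (max (dist a x) (dist b x))
    rw [mem_map]
    filter_upwards [eventually_ge_atTop m0] with m hm
    have hm' : max (dist a x) (dist b x) < (m : ℝ) :=
      lt_of_lt_of_le hm0 (by exact_mod_cast hm)
    have ha : a ∈ ball x (m : ℝ) := by
      rw [mem_ball]
      exact lt_of_le_of_lt (le_max_left _ _) hm'
    have hb : b ∈ ball x (m : ℝ) := by
      rw [mem_ball]
      exact lt_of_le_of_lt (le_max_right _ _) hm'
    exact key m a ha b hb
  have hle : Filter.map ψ atTop ≤ 𝓟 C := le_principal_iff.mpr hCev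
  have hΦC : Φ ∈ C := by
    have : ClusterPt Φ (𝓟 C) := hcl.mono hle
    rw [← hCclosed.closure_eq]
    exact mem_closure_iff_clusterPt.mpr this
  simpa [hCdef] using hΦC
end

section
/- Let Y be a metric space satisfying the SRA(α/2)-condition on a set {x₁,…,x_{k−1}} with R = min_{i<j} d(xᵢ,xⱼ), and let y₁,y₂ ∈ B_{αR/6}(x₁) and x, y ∈ {x₂,…,x_{k−1}}, z ∈ {y₁,y₂}. Writing z̄ = x₁ and x̄ = x, ȳ = y, we have: d(x,y) ≤ max{d(x,z) + α·d(z,y), α·d(x,z) + d(z,y)} whenever {x,y,z} consists of one point of {y₁,y₂} and two points of {x₂,…,x_{k−1}}. -/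
/-!
Moving the middle point `c` of an SRA(α/2) triple `a, b, c` by at most `ε = αR/6`, where `R`
bounds `d(a,c)` and `d(c,b)` from below, changes each side of the inequality by at most
`(1 + α/2) ε`. Doubling the coefficient from `α/2` to `α` gains `(α/2)(R - ε) ≥ (1 + α/2) ε`
on the other side, which pays for the perturbation.
-/

open Metric Set

section SRAPerturbation

variable {X : Type*} [PseudoMetricSpace X] {a b c z : X} {α R : ℝ}

lemma add_half_mul_dist_le_add_mul_dist (hα : 0 ≤ α) (hα2 : α ≤ 2)
    (hz : dist z c ≤ α * R / 6) (hcb : R ≤ dist c b) :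
    dist a c + α / 2 * dist c b ≤ dist a z + α * dist z b := by
  have hac : dist a c ≤ dist a z + dist z c := dist_triangle a z c
  have hcb' : dist c b ≤ dist c z + dist z b := dist_triangle c z b
  have hzb : dist c b - dist c z ≤ dist z b := by linarith
  rw [dist_comm c z] at hcb' hzb
  have hε : 0 ≤ dist z c := dist_nonneg
  calc dist a c + α / 2 * dist c b
      ≤ dist a z + dist z c + α / 2 * (dist z c + dist z b) := by gcongr
    _ ≤ dist a z + α * dist z b := by nlinarith [mul_le_mul_of_nonneg_left hzb hα]

lemma dist_le_max_of_sra_half_of_dist_le (hα : 0 ≤ α) (hα2 : α ≤ 2)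
    (hSRA : dist a b ≤ max (dist a c + α / 2 * dist c b) (α / 2 * dist a c + dist c b))
    (hz : dist z c ≤ α * R / 6) (hac : R ≤ dist a c) (hcb : R ≤ dist c b) :
    dist a b ≤ max (dist a z + α * dist z b) (α * dist a z + dist z b) := by
  have hright : α / 2 * dist a c + dist c b ≤ α * dist a z + dist z b := by
    have := add_half_mul_dist_le_add_mul_dist (a := b) hα hα2 hz (dist_comm a c ▸ hac)
    rw [dist_comm b c, dist_comm c a, dist_comm b z, dist_comm z a] at this
    linarith
  exact hSRA.trans (max_le_max (add_half_mul_dist_le_add_mul_dist hα hα2 hz hcb) hright)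

end SRAPerturbation

theorem stmt_16 {X : Type*} [MetricSpace X] (n : ℕ) (α : ℝ) (hα : 0 < α) (hα1 : α < 1)
    (x : Fin (n + 1) → X)
    (hSRA : ∀ i j l : Fin (n + 1), dist (x i) (x j) ≤
      max (dist (x i) (x l) + α / 2 * dist (x l) (x j))
        (α / 2 * dist (x i) (x l) + dist (x l) (x j)))
    (R : ℝ)
    (hR : IsLeast {d : ℝ | ∃ i j : Fin (n + 1), i ≠ j ∧ d = dist (x i) (x j)} R)
    (y₁ y₂ : X)
    (hy₁ : y₁ ∈ ball (x 0) (α * R / 6)) (hy₂ : y₂ ∈ ball (x 0) (α * R / 6)) :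
    ∀ (i j : Fin n) (z : X), z = y₁ ∨ z = y₂ →
      dist (x i.succ) (x j.succ) ≤
        max (dist (x i.succ) z + α * dist z (x j.succ))
          (α * dist (x i.succ) z + dist z (x j.succ)) := by
  intro i j z hz
  have hz0 : dist z (x 0) ≤ α * R / 6 := by
    rcases hz with rfl | rfl
    · exact (mem_ball.1 hy₁).le
    · exact (mem_ball.1 hy₂).le
  have hR_le : ∀ k l, k ≠ l → R ≤ dist (x k) (x l) := fun k l hkl => hR.2 ⟨k, l, hkl, rfl⟩
  exact dist_le_max_of_sra_half_of_dist_le hα.le (by linarith) (hSRA i.succ j.succ 0) hz0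
    (hR_le _ _ (Fin.succ_ne_zero i)) (hR_le _ _ (Fin.succ_ne_zero j).symm)
end

section
/- Let X be a metric space, x ∈ X, R > 0, and suppose the closed ball B_R(x) is free of N-point SRA(α)-subspaces whenever contained in a ball of radius r/2 < R, and that B_R(x) satisfies the doubling condition with constant λ. Then there exists Ñ = Ñ(N, λ, R/r) ∈ ℕ such that B_R(x) is free of Ñ-point SRA(α)-subspaces. -/
open Metric Set

universe u

theorem stmt_19 :
    ∃ F : ℕ → ℕ → ℝ → ℕ,
      ∀ (X : Type u) [MetricSpace X] (x : X) (R r : ℝ) (N lam : ℕ) (α : ℝ),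
        0 < α → α < 1 → 0 < r → r / 2 < R →
        (∀ p : X, SRAFree N α (closedBall x R ∩ ball p (r / 2))) →
        (∀ (p : X) (ρ : ℝ), 0 < ρ →
          ∃ c : Fin lam → X, closedBall x R ∩ ball p ρ ⊆ ⋃ i, ball (c i) (ρ / 2)) →
        SRAFree (F N lam (R / r)) α (closedBall x R) := by
  classical
  refine ⟨fun N lam q => lam ^ ⌈4 * q⌉₊ * N + 1, ?_⟩
  intro X _ x R r N lam α hα hα1 hr hrR hsmall hdoub
  intro Y hY hYcard
  have hR : 0 < R := lt_trans (by linarith) hrR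
  set K := ⌈4 * (R / r)⌉₊ with hK
  -- iterated covering
  have cover : ∀ k : ℕ, ∃ T : Finset X, T.card ≤ lam ^ k ∧
      closedBall x R ⊆ ⋃ p ∈ T, ball p (2 * R / 2 ^ k) := by
    intro k
    induction k with
    | zero =>
      refine ⟨{x}, by simp, ?_⟩
      intro y hy
      have hy' : dist y x ≤ R := mem_closedBall.mp hy
      simp only [mem_iUnion, Finset.mem_singleton, exists_prop]
      exact ⟨x, rfl, mem_ball.mpr (by norm_num; linarith)⟩
    | succ k ih =>
      obtain ⟨T, hTc, hTcov⟩ := ih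
      have hρ : (0:ℝ) < 2 * R / 2 ^ k := by positivity
      choose c hc using fun p => hdoub p (2 * R / 2 ^ k) hρ
      refine ⟨T.biUnion (fun p => Finset.image (c p) Finset.univ), ?_, ?_⟩
      · calc (T.biUnion (fun p => Finset.image (c p) Finset.univ)).card
            ≤ ∑ p ∈ T, (Finset.image (c p) Finset.univ).card :=
              Finset.card_biUnion_le
          _ ≤ ∑ p ∈ T, lam := by
              refine Finset.sum_le_sum fun p _ => ?_
              simpa using Finset.card_image_le (f := c p) (s := Finset.univ)
          _ = T.card * lam := by rw [Finset.sum_const, smul_eq_mul]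
          _ ≤ lam ^ k * lam := Nat.mul_le_mul_right _ hTc
          _ = lam ^ (k + 1) := by ring
      · intro y hy
        obtain ⟨p, hpT, hyp⟩ := by
          simpa only [mem_iUnion, exists_prop] using hTcov hy
        obtain ⟨i, hi⟩ := by
          simpa only [mem_iUnion] using hc p ⟨hy, hyp⟩
        simp only [mem_iUnion, Finset.mem_biUnion, Finset.mem_image,
          Finset.mem_univ, exists_prop, true_and]
        refine ⟨c p i, ⟨p, hpT, ⟨i, rfl⟩⟩, ?_⟩
        have : (2 : ℝ) * R / 2 ^ (k + 1) = (2 * R / 2 ^ k) / 2 := by ring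
        rw [this]; exact hi
  obtain ⟨T, hTc, hTcov⟩ := cover K
  -- the small radius bound
  have hrad : 2 * R / 2 ^ K ≤ r / 2 := by
    have h1 : (4 : ℝ) * (R / r) ≤ K := Nat.le_ceil _
    have h2 : (K : ℝ) < 2 ^ K := by
      exact_mod_cast Nat.lt_two_pow_self (n := K)
    have h3 : (4 : ℝ) * (R / r) ≤ 2 ^ K := le_of_lt (lt_of_le_of_lt h1 h2)
    have hpow : (0:ℝ) < 2 ^ K := by positivity
    have h4 : 4 * R ≤ 2 ^ K * r := by
      rw [mul_div_assoc'] at h3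
      exact (div_le_iff₀ hr).mp h3
    rw [div_le_div_iff₀ hpow two_pos]
    nlinarith
  -- assign each point of Y a center
  have hmaps : ∀ y : X, ∃ p, y ∈ Y → p ∈ T ∧ y ∈ ball p (2 * R / 2 ^ K) := by
    intro y
    by_cases hy : y ∈ Y
    · obtain ⟨p, hpT, hyp⟩ := by
        simpa only [mem_iUnion, exists_prop] using hTcov (hY hy)
      exact ⟨p, fun _ => ⟨hpT, hyp⟩⟩
    · exact ⟨x, fun h => absurd h hy⟩
  choose f hf using hmaps
  have hmt : ∀ y ∈ Y, f y ∈ T := fun y hy => (hf y hy).1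
  -- pigeonhole
  have hcard : T.card * N < Y.card := by
    have hYc : Y.card = lam ^ K * N + 1 := by rw [hYcard, hK]
    have : T.card * N ≤ lam ^ K * N := Nat.mul_le_mul_right _ hTc
    omega
  obtain ⟨p, hpT, hfib⟩ :=
    Finset.exists_lt_card_fiber_of_mul_lt_card_of_maps_to hmt hcard
  obtain ⟨Y', hY'sub, hY'card⟩ :=
    Finset.exists_subset_card_eq (s := Y.filter fun y => f y = p) (n := N) (le_of_lt hfib)
  have hY'Y : Y' ⊆ Y := hY'sub.trans (Finset.filter_subset _ _)
  have hY'S : ↑Y' ⊆ closedBall x R ∩ ball p (r / 2) := by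
    intro y hy
    have hyY : y ∈ Y := hY'Y hy
    have hyf : f y = p := (Finset.mem_filter.mp (hY'sub hy)).2
    refine ⟨hY hyY, ?_⟩
    have := (hf y hyY).2
    rw [hyf] at this
    exact ball_subset_ball hrad this
  obtain ⟨a, ha, z, hz, b, hb, hd⟩ := hsmall p Y' hY'S hY'card
  exact ⟨a, hY'Y ha, z, hY'Y hz, b, hY'Y hb, hd⟩
end
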